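/- arXiv:2604.00899 — 6 statements merged into one kernel-verified Lean document; each statement's English description precedes it below -/
import Mathlib

section
/- Let W be a graphon on an atomless standard probability space (Ω, μ). If W is not a connected graphon, then lim_{n→∞} P[G(n,W) is a connected graph] = 0. -/
open MeasureTheory Filter

namespace Stmt

variable {Ω : Type} [MeasurableSpace Ω]

/-- `W` is a graphon: symmetric, measurable, `[0,1]`-valued. -/
def IsGraphon (W : Ω → Ω → ℝ) : Prop :=
  Measurable (Function.uncurry W) ∧ (∀ x y, W x y = W y x) ∧ ∀ x y, W x y ∈ Set.Icc (0:ℝ) 1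

/-- The sample space measure for `G(n,W)`: `n` i.i.d. types distributed by `μ`, together with
independent uniform labels on `[0,1]` for each unordered pair of vertices. -/
noncomputable def sampleMeasure (μ : Measure Ω) (n : ℕ) :
    Measure ((Fin n → Ω) × (Sym2 (Fin n) → ℝ)) :=
  (Measure.pi fun _ => μ).prod (Measure.pi fun _ => volume.restrict (Set.Icc (0:ℝ) 1))

/-- The graph determined by a sample point: `{i,j}` is an edge iff the uniform label of the
pair `{i,j}` is at most `W(Xᵢ, Xⱼ)`. -/
def sampleGraph (W : Ω → Ω → ℝ) (n : ℕ) (p : (Fin n → Ω) × (Sym2 (Fin n) → ℝ)) :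
    SimpleGraph (Fin n) :=
  SimpleGraph.fromRel fun i j => p.2 s(i, j) ≤ W (p.1 i) (p.1 j)

/-- The probability that `G(n,W)` satisfies the property `P`. -/
noncomputable def graphProb (μ : Measure Ω) (W : Ω → Ω → ℝ) (n : ℕ)
    (P : SimpleGraph (Fin n) → Prop) : ℝ :=
  (sampleMeasure μ n {p | P (sampleGraph W n p)}).toReal

/-- The graphon `W` is connected. -/
def GraphonConnected (μ : Measure Ω) (W : Ω → Ω → ℝ) : Prop :=
  ∀ S : Set Ω, MeasurableSet S → 0 < μ S → μ S < 1 →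
    0 < ∫ p in S ×ˢ Sᶜ, W p.1 p.2 ∂(μ.prod μ)

/-- In a graph, a walk from inside `V` to outside `V` crosses an edge. -/
lemma cross_of_walk {α : Type*} {G : SimpleGraph α} (V : Set α) {i j : α}
    (w : G.Walk i j) (hi : i ∈ V) (hj : j ∉ V) :
    ∃ a b, G.Adj a b ∧ a ∈ V ∧ b ∉ V := by
  induction w with
  | nil => exact absurd hi hj
  | @cons u v x h p ih =>
      by_cases hv : v ∈ V
      · exact ih hv hj
      · exact ⟨u, v, h, hi, hv⟩

instance : IsProbabilityMeasure (volume.restrict (Set.Icc (0:ℝ) 1)) :=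
  ⟨by simp [Real.volume_Icc]⟩

/-- Pushforward of an i.i.d. pi measure under a pair of distinct coordinates is the
product measure. -/
lemma map_pair {n : ℕ} (μ : Measure Ω) [IsProbabilityMeasure μ] {i j : Fin n}
    (hij : i ≠ j) :
    Measure.map (fun x : Fin n → Ω => (x i, x j)) (Measure.pi fun _ => μ) = μ.prod μ := by
  refine (Measure.prod_eq fun A B hA hB => ?_).symm
  rw [Measure.map_apply (by exact (measurable_pi_apply i).prodMk (measurable_pi_apply j))
    (hA.prod hB)]
  classical
  have hset : (fun x : Fin n → Ω => (x i, x j)) ⁻¹' (A ×ˢ B) =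
      Set.pi Set.univ (fun k => if k = i then A else if k = j then B else Set.univ) := by
    ext x
    simp only [Set.mem_preimage, Set.mem_prod, Set.mem_univ_pi]
    constructor
    · rintro ⟨h1, h2⟩ k
      split_ifs with h h'
      · subst h; exact h1
      · subst h'; exact h2
      · trivial
    · intro h
      have h1 := h i
      have h2 := h j
      rw [if_pos rfl] at h1
      rw [if_neg (fun h : j = i => hij h.symm), if_pos rfl] at h2
      exact ⟨h1, h2⟩
  rw [hset, Measure.pi_pi]
  have : ∀ k ∈ Finset.univ \ ({i, j} : Finset (Fin n)),
      μ (if k = i then A else if k = j then B else Set.univ) = 1 := by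
    intro k hk
    simp only [Finset.mem_sdiff, Finset.mem_insert, Finset.mem_singleton] at hk
    rw [if_neg (fun h => hk.2 (Or.inl h)), if_neg (fun h => hk.2 (Or.inr h))]
    exact measure_univ
  rw [← Finset.prod_subset (Finset.subset_univ ({i, j} : Finset (Fin n)))
    (fun k _ hk => this k (Finset.mem_sdiff.2 ⟨Finset.mem_univ k, hk⟩)),
    Finset.prod_pair hij]
  simp [hij, Ne.symm hij]

/-- If the graphon `W` is not connected, then a.a.s. `G(n,W)` is not a connected graph. -/
theorem not_connected_of_graphon_not_connected
    [StandardBorelSpace Ω] (μ : Measure Ω) [IsProbabilityMeasure μ] [NullSingletonClass μ]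
    (W : Ω → Ω → ℝ) (hW : IsGraphon W)
    (hconn : ¬ GraphonConnected μ W) :
    Tendsto (fun n : ℕ => graphProb μ W n fun G => G.Connected) atTop (nhds 0) := by
  classical
  obtain ⟨S, hSm, hS0, hS1, hint⟩ : ∃ S : Set Ω, MeasurableSet S ∧ 0 < μ S ∧ μ S < 1 ∧
      ∫ p in S ×ˢ Sᶜ, W p.1 p.2 ∂(μ.prod μ) ≤ 0 := by
    unfold GraphonConnected at hconn
    push_neg at hconn
    obtain ⟨S, h1, h2, h3, h4⟩ := hconn
    exact ⟨S, h1, h2, h3, h4⟩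
  have hWnn : ∀ p : Ω × Ω, 0 ≤ W p.1 p.2 := fun p => (hW.2.2 p.1 p.2).1
  have hWm : Measurable fun p : Ω × Ω => W p.1 p.2 := hW.1
  have hSSm : MeasurableSet (S ×ˢ Sᶜ) := hSm.prod hSm.compl
  -- the integral is zero, so W vanishes a.e. on S ×ˢ Sᶜ
  have hInt : Integrable (fun p : Ω × Ω => W p.1 p.2) ((μ.prod μ).restrict (S ×ˢ Sᶜ)) := by
    refine Integrable.mono' (integrable_const 1) hWm.aestronglyMeasurable ?_
    refine Filter.Eventually.of_forall fun p => ?_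
    rw [Real.norm_eq_abs, abs_of_nonneg (hWnn p)]
    exact (hW.2.2 p.1 p.2).2
  have hzero : (fun p : Ω × Ω => W p.1 p.2) =ᶠ[ae ((μ.prod μ).restrict (S ×ˢ Sᶜ))] 0 := by
    rw [← integral_eq_zero_iff_of_nonneg hWnn hInt]
    exact le_antisymm hint (integral_nonneg hWnn)
  -- the "bad" null set
  set N : Set (Ω × Ω) := (S ×ˢ Sᶜ) ∩ {p | W p.1 p.2 ≠ 0} with hNdef
  have hNm : MeasurableSet N := hSSm.inter ((hWm (measurableSet_singleton 0)).compl)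
  have hne : MeasurableSet {p : Ω × Ω | W p.1 p.2 ≠ 0} :=
    (hWm (measurableSet_singleton 0)).compl
  have hN0 : (μ.prod μ) N = 0 := by
    have h2 : ((μ.prod μ).restrict (S ×ˢ Sᶜ)) {p : Ω × Ω | W p.1 p.2 ≠ 0} = 0 := by
      have := hzero
      rw [Filter.EventuallyEq, ae_iff] at this
      simpa using this
    rw [Measure.restrict_apply hne] at h2
    rw [hNdef, Set.inter_comm]
    exact h2
  -- per-n measure bound
  have key : ∀ n : ℕ, sampleMeasure μ n {p | (sampleGraph W n p).Connected}
      ≤ μ S ^ n + μ Sᶜ ^ n := by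
    intro n
    set ν := sampleMeasure μ n with hν
    -- the covering sets
    have hsub : {p : (Fin n → Ω) × (Sym2 (Fin n) → ℝ) | (sampleGraph W n p).Connected} ⊆
        ((Set.univ.pi fun _ => S) ×ˢ Set.univ) ∪ ((Set.univ.pi fun _ => Sᶜ) ×ˢ Set.univ) ∪
        (⋃ e : Sym2 (Fin n), {p | p.2 e ≤ 0}) ∪
        (⋃ i : Fin n, ⋃ j : Fin n, {p | i ≠ j ∧ (p.1 i, p.1 j) ∈ N}) := by
      intro p hp
      by_cases hall : ∀ i, p.1 i ∈ S
      · exact Or.inl (Or.inl (Or.inl ⟨fun i _ => hall i, trivial⟩))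
      by_cases hnone : ∀ i, p.1 i ∈ Sᶜ
      · exact Or.inl (Or.inl (Or.inr ⟨fun i _ => hnone i, trivial⟩))
      push_neg at hall hnone
      obtain ⟨j, hj⟩ := hall
      obtain ⟨i, hi⟩ := hnone
      simp only [Set.mem_compl_iff, not_not] at hi
      obtain ⟨a, b, hab, ha, hb⟩ := cross_of_walk {k : Fin n | p.1 k ∈ S}
        (hp.preconnected i j).some hi hj
      rw [sampleGraph, SimpleGraph.fromRel_adj] at hab
      have hle : p.2 s(a, b) ≤ W (p.1 a) (p.1 b) := by
        rcases hab.2 with h | h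
        · exact h
        · rw [Sym2.eq_swap] at h
          rw [hW.2.1 (p.1 b) (p.1 a)] at h
          exact h
      by_cases h0 : p.2 s(a, b) ≤ 0
      · exact Or.inl (Or.inr (Set.mem_iUnion.2 ⟨s(a, b), h0⟩))
      · refine Or.inr (Set.mem_iUnion.2 ⟨a, Set.mem_iUnion.2 ⟨b, hab.1, ?_⟩⟩)
        exact ⟨⟨ha, hb⟩, by push_neg at h0; exact ne_of_gt (lt_of_lt_of_le h0 hle)⟩
    have h1 : ν ((Set.univ.pi fun _ => S) ×ˢ Set.univ) = μ S ^ n := by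
      rw [hν, sampleMeasure, Measure.prod_prod, measure_univ, mul_one, Measure.pi_pi]
      simp
    have h2 : ν ((Set.univ.pi fun _ => Sᶜ) ×ˢ Set.univ) = μ Sᶜ ^ n := by
      rw [hν, sampleMeasure, Measure.prod_prod, measure_univ, mul_one, Measure.pi_pi]
      simp
    have h3 : ∀ e : Sym2 (Fin n), ν {p | p.2 e ≤ 0} = 0 := by
      intro e
      have hs : {p : (Fin n → Ω) × (Sym2 (Fin n) → ℝ) | p.2 e ≤ 0} =
          Set.univ ×ˢ {u : Sym2 (Fin n) → ℝ | u e ≤ 0} := by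
        ext q; simp [Set.mem_prod]
      have hs2 : {u : Sym2 (Fin n) → ℝ | u e ≤ 0} =
          Set.pi Set.univ (fun e' => if e' = e then Set.Iic (0:ℝ) else Set.univ) := by
        ext u
        simp only [Set.mem_setOf_eq, Set.mem_univ_pi]
        constructor
        · intro h e'; split_ifs with he
          · subst he; exact h
          · trivial
        · intro h; have := h e; simpa using this
      rw [hν, sampleMeasure, hs, Measure.prod_prod, measure_univ, one_mul, hs2,
        Measure.pi_pi]
      refine Finset.prod_eq_zero (Finset.mem_univ e) ?_
      rw [if_pos rfl, Measure.restrict_apply measurableSet_Iic]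
      have : Set.Iic (0:ℝ) ∩ Set.Icc 0 1 = {0} := by
        ext x
        simp only [Set.mem_inter_iff, Set.mem_Iic, Set.mem_Icc, Set.mem_singleton_iff]
        constructor
        · rintro ⟨h1, h2, _⟩; exact le_antisymm h1 h2
        · rintro rfl; norm_num
      rw [this]
      exact Real.volume_singleton
    have h4 : ∀ i j : Fin n, ν {p | i ≠ j ∧ (p.1 i, p.1 j) ∈ N} = 0 := by
      intro i j
      by_cases hij : i = j
      · simp [hij]
      · have hs : {p : (Fin n → Ω) × (Sym2 (Fin n) → ℝ) | i ≠ j ∧ (p.1 i, p.1 j) ∈ N} =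
            ((fun x : Fin n → Ω => (x i, x j)) ⁻¹' N) ×ˢ Set.univ := by
          ext q; simp [Set.mem_prod, hij]
        rw [hν, sampleMeasure, hs, Measure.prod_prod, measure_univ, mul_one]
        have hmeas : Measurable fun x : Fin n → Ω => (x i, x j) :=
          (measurable_pi_apply i).prodMk (measurable_pi_apply j)
        have := map_pair (n := n) μ hij
        calc (Measure.pi fun _ => μ) ((fun x : Fin n → Ω => (x i, x j)) ⁻¹' N)
            = Measure.map (fun x : Fin n → Ω => (x i, x j)) (Measure.pi fun _ => μ) N := by
              rw [Measure.map_apply hmeas hNm]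
          _ = (μ.prod μ) N := by rw [this]
          _ = 0 := hN0
    calc ν {p | (sampleGraph W n p).Connected}
        ≤ ν (((Set.univ.pi fun _ => S) ×ˢ Set.univ) ∪ ((Set.univ.pi fun _ => Sᶜ) ×ˢ Set.univ) ∪
            (⋃ e : Sym2 (Fin n), {p | p.2 e ≤ 0}) ∪
            (⋃ i : Fin n, ⋃ j : Fin n, {p | i ≠ j ∧ (p.1 i, p.1 j) ∈ N})) :=
          measure_mono hsub
      _ ≤ ν (((Set.univ.pi fun _ => S) ×ˢ Set.univ) ∪ ((Set.univ.pi fun _ => Sᶜ) ×ˢ Set.univ) ∪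
            (⋃ e : Sym2 (Fin n), {p | p.2 e ≤ 0})) +
          ν (⋃ i : Fin n, ⋃ j : Fin n, {p | i ≠ j ∧ (p.1 i, p.1 j) ∈ N}) := measure_union_le _ _
      _ ≤ (ν (((Set.univ.pi fun _ => S) ×ˢ Set.univ) ∪ ((Set.univ.pi fun _ => Sᶜ) ×ˢ Set.univ)) +
          ν (⋃ e : Sym2 (Fin n), {p | p.2 e ≤ 0})) + 0 := by
          gcongr
          · exact measure_union_le _ _
          · refine le_of_eq (measure_iUnion_null fun i => measure_iUnion_null fun j => h4 i j)
      _ ≤ ((ν ((Set.univ.pi fun _ => S) ×ˢ Set.univ) + ν ((Set.univ.pi fun _ => Sᶜ) ×ˢ Set.univ)) +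
          0) + 0 := by
          gcongr
          · exact measure_union_le _ _
          · exact le_of_eq (measure_iUnion_null h3)
      _ = μ S ^ n + μ Sᶜ ^ n := by rw [h1, h2]; ring
  -- pass to real numbers and take the limit
  set a := (μ S).toReal with ha
  set b := (μ Sᶜ).toReal with hb
  have hμS_fin : μ S ≠ ⊤ := (measure_lt_top μ S).ne
  have hμSc_fin : μ Sᶜ ≠ ⊤ := (measure_lt_top μ Sᶜ).ne
  have ha0 : 0 ≤ a := ENNReal.toReal_nonneg
  have hb0 : 0 ≤ b := ENNReal.toReal_nonneg
  have ha1 : a < 1 := by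
    rw [ha]
    rw [← ENNReal.toReal_one]
    exact ENNReal.toReal_strict_mono ENNReal.one_ne_top hS1
  have hSc1 : μ Sᶜ < 1 := by
    rw [prob_compl_eq_one_sub hSm]
    exact ENNReal.sub_lt_self ENNReal.one_ne_top one_ne_zero hS0.ne'
  have hb1 : b < 1 := by
    rw [hb, ← ENNReal.toReal_one]
    exact ENNReal.toReal_strict_mono ENNReal.one_ne_top hSc1
  have hub : ∀ n : ℕ, graphProb μ W n (fun G => G.Connected) ≤ a ^ n + b ^ n := by
    intro n
    have hfin : μ S ^ n + μ Sᶜ ^ n ≠ ⊤ :=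
      ENNReal.add_ne_top.2 ⟨ENNReal.pow_ne_top hμS_fin, ENNReal.pow_ne_top hμSc_fin⟩
    have hmono := ENNReal.toReal_mono hfin (key n)
    rw [ENNReal.toReal_add (ENNReal.pow_ne_top hμS_fin) (ENNReal.pow_ne_top hμSc_fin),
      ENNReal.toReal_pow, ENNReal.toReal_pow] at hmono
    exact hmono
  have hlb : ∀ n : ℕ, 0 ≤ graphProb μ W n (fun G => G.Connected) :=
    fun n => ENNReal.toReal_nonneg
  have hg : Tendsto (fun n : ℕ => a ^ n + b ^ n) atTop (nhds 0) := by
    have := (tendsto_pow_atTop_nhds_zero_of_lt_one ha0 ha1).add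
      (tendsto_pow_atTop_nhds_zero_of_lt_one hb0 hb1)
    simpa using this
  exact squeeze_zero hlb hub hg

end Stmt
end

section
/- Let W be a graphon on an atomless standard probability space (Ω, μ). If liminf_{α↓0} μ(D_W(α))/α > 0, then liminf_{n→∞} P[G(n,W) contains an isolated vertex] > 0. -/
open MeasureTheory Filter

namespace Stmt

variable {Ω : Type} [MeasurableSpace Ω]

/-- The degree of a point `x` in the graphon `W`. -/
noncomputable def degW (μ : Measure Ω) (W : Ω → Ω → ℝ) (x : Ω) : ℝ := ∫ y, W x y ∂μ

/-- The set of points of degree at most `α`. -/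
def DW (μ : Measure Ω) (W : Ω → Ω → ℝ) (α : ℝ) : Set Ω := {x | degW μ W x ≤ α}

section Helpers

open MeasureTheory Filter Set ENNReal

variable {Ω : Type} [MeasurableSpace Ω]

noncomputable def nuI : Measure ℝ := volume.restrict (Set.Icc (0:ℝ) 1)

instance : IsProbabilityMeasure nuI :=
  ⟨by simp [nuI, Real.volume_Icc]⟩

lemma nuI_Ioi {a : ℝ} (h0 : 0 ≤ a) (h1 : a ≤ 1) :
    nuI (Set.Ioi a) = ENNReal.ofReal (1 - a) := by
  rw [nuI, Measure.restrict_apply measurableSet_Ioi]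
  have : Set.Ioi a ∩ Set.Icc 0 1 = Set.Ioc a 1 := by
    ext x
    simp only [Set.mem_inter_iff, Set.mem_Ioi, Set.mem_Icc, Set.mem_Ioc]
    constructor
    · rintro ⟨h, _, h2⟩; exact ⟨h, h2⟩
    · rintro ⟨h, h2⟩; exact ⟨h, le_trans h0 h.le, h2⟩
  rw [this, Real.volume_Ioc]

section Step

variable {W : Ω → Ω → ℝ}

lemma measurable_degW (μ : Measure Ω) [SigmaFinite μ] (hW : Measurable (Function.uncurry W)) :
    Measurable (Stmt.degW μ W) :=
  (hW.stronglyMeasurable.integral_prod_right').measurable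

lemma measurableSet_DW (μ : Measure Ω) [SigmaFinite μ] (hW : Measurable (Function.uncurry W))
    (α : ℝ) : MeasurableSet (Stmt.DW μ W α) :=
  measurableSet_le (measurable_degW μ hW) measurable_const

/-- Product over `univ.erase i` as a product over `Fin m` via `succAbove`. -/
lemma prod_erase_succAbove {M : Type*} [CommMonoid M] {m : ℕ} (i : Fin (m+1))
    (f : Fin (m+1) → M) :
    ∏ k ∈ Finset.univ.erase i, f k = ∏ j : Fin m, f (i.succAbove j) := by
  rw [show Finset.univ.erase i = Finset.univ.image i.succAbove by
    ext k
    simp only [Finset.mem_erase, Finset.mem_univ, and_true, Finset.mem_image, true_and]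
    constructor
    · intro hk
      exact Fin.exists_succAbove_eq hk
    · rintro ⟨j, rfl⟩
      exact Fin.succAbove_ne i j]
  rw [Finset.prod_image (fun a _ b _ h => Fin.succAbove_right_injective h)]

/-- `lintegral` of a product of coordinate functions over a finite product of
probability measures. -/
lemma lintegral_pi_prod {X : Type*} [MeasurableSpace X] (μ : Measure X)
    [IsProbabilityMeasure μ] :
    ∀ {m : ℕ} (f : Fin m → X → ℝ≥0∞), (∀ j, Measurable (f j)) →
      ∫⁻ z, ∏ j, f j (z j) ∂(Measure.pi fun _ : Fin m => μ) = ∏ j, ∫⁻ x, f j x ∂μ := by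
  intro m
  induction m with
  | zero =>
      intro f _
      simp
  | succ m ih =>
      intro f hf
      have hmp := measurePreserving_piFinSuccAbove (fun _ : Fin (m+1) => μ) 0
      set g : X × (Fin m → X) → ℝ≥0∞ :=
        fun w => f 0 w.1 * ∏ j, f (Fin.succ j) (w.2 j) with hg
      have hgm : Measurable g := by
        apply Measurable.mul
        · exact (hf 0).comp measurable_fst
        · exact Finset.measurable_prod _ fun j _ =>
            (hf j.succ).comp ((measurable_pi_apply j).comp measurable_snd)
      have key : ∫⁻ z, ∏ j, f j (z j) ∂(Measure.pi fun _ : Fin (m+1) => μ)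
          = ∫⁻ w, g w ∂(μ.prod (Measure.pi fun _ : Fin m => μ)) := by
        rw [← hmp.lintegral_comp hgm]
        refine lintegral_congr fun z => ?_
        have he : (MeasurableEquiv.piFinSuccAbove (fun _ : Fin (m+1) => X) 0) z
            = (z 0, fun j => z (Fin.succAbove 0 j)) := rfl
        rw [he, hg]
        simp [Fin.prod_univ_succ, Fin.zero_succAbove]
      have h2 : ∫⁻ w, g w ∂(μ.prod (Measure.pi fun _ : Fin m => μ))
          = (∫⁻ x, f 0 x ∂μ) *
            ∫⁻ y, ∏ j, f (Fin.succ j) (y j) ∂(Measure.pi fun _ : Fin m => μ) :=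
        lintegral_prod_mul ((hf 0).aemeasurable)
          ((Finset.measurable_prod Finset.univ fun (j : Fin m) _ =>
            (hf j.succ).comp (measurable_pi_apply j)).aemeasurable)
      rw [key, h2, ih _ fun j => hf j.succ, Fin.prod_univ_succ]

/-- Measure of the cylinder set in the edge-label space. -/
lemma nuI_pi_cylinder {n : ℕ} (i : Fin n) (c : Fin n → ℝ) (hc : ∀ k, c k ∈ Set.Icc (0:ℝ) 1) :
    (Measure.pi fun _ : Sym2 (Fin n) => nuI) {u | ∀ k, k ≠ i → c k < u s(i, k)}
      = ∏ k ∈ Finset.univ.erase i, ENNReal.ofReal (1 - c k) := by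
  classical
  set B : Sym2 (Fin n) → Set ℝ :=
    fun e => ⋂ (k : Fin n) (_ : k ≠ i ∧ s(i, k) = e), Set.Ioi (c k) with hB
  have hBe : ∀ k : Fin n, k ≠ i → B s(i, k) = Set.Ioi (c k) := by
    intro k hk
    ext t
    simp only [hB, Set.mem_iInter]
    constructor
    · intro h; exact h k ⟨hk, rfl⟩
    · rintro ht k' ⟨hk'i, he⟩
      rw [Sym2.congr_right] at he
      rwa [he]
  have hset : {u : Sym2 (Fin n) → ℝ | ∀ k, k ≠ i → c k < u s(i, k)}
      = Set.pi Set.univ B := by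
    ext u
    simp only [Set.mem_setOf_eq, Set.mem_univ_pi, hB, Set.mem_iInter]
    constructor
    · rintro h e k ⟨hk, rfl⟩; exact h k hk
    · intro h k hk
      exact h s(i, k) k ⟨hk, rfl⟩
  rw [hset, Measure.pi_pi]
  have hsub : (Finset.univ.erase i).image (fun k => s(i, k)) ⊆ Finset.univ :=
    Finset.subset_univ _
  have hone : ∀ e ∈ Finset.univ, e ∉ (Finset.univ.erase i).image (fun k => s(i, k)) →
      nuI (B e) = 1 := by
    intro e _ he
    have : B e = Set.univ := by
      ext t
      simp only [hB, Set.mem_iInter, Set.mem_univ, iff_true]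
      rintro k ⟨hk, rfl⟩
      exact absurd (Finset.mem_image.2 ⟨k, Finset.mem_erase.2 ⟨hk, Finset.mem_univ k⟩, rfl⟩) he
    rw [this]
    exact measure_univ
  rw [← Finset.prod_subset hsub hone, Finset.prod_image ?hinj]
  case hinj =>
    intro k hk k' hk' h
    exact Sym2.congr_right.1 h
  refine Finset.prod_congr rfl fun k hk => ?_
  rw [hBe k (Finset.mem_erase.1 hk).1, nuI_Ioi (hc k).1 (hc k).2]

/-- The good event: vertex `i` has a low-degree type and is isolated. -/
def Aset (μ : Measure Ω) (W : Ω → Ω → ℝ) (α : ℝ) {n : ℕ} (i : Fin n) :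
    Set ((Fin n → Ω) × (Sym2 (Fin n) → ℝ)) :=
  {p | p.1 i ∈ Stmt.DW μ W α ∧ ∀ k, k ≠ i → W (p.1 i) (p.1 k) < p.2 s(i, k)}

lemma measurableSet_Aset (μ : Measure Ω) [SigmaFinite μ]
    (hW : Measurable (Function.uncurry W)) (α : ℝ) {n : ℕ} (i : Fin n) :
    MeasurableSet (Aset μ W α i) := by
  have h1 : MeasurableSet {p : (Fin n → Ω) × (Sym2 (Fin n) → ℝ) |
      p.1 i ∈ Stmt.DW μ W α} :=
    ((measurable_pi_apply i).comp measurable_fst) (measurableSet_DW μ hW α)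
  have h2 : ∀ k : Fin n, MeasurableSet {p : (Fin n → Ω) × (Sym2 (Fin n) → ℝ) |
      W (p.1 i) (p.1 k) < p.2 s(i, k)} := by
    intro k
    have hpair : Measurable fun p : (Fin n → Ω) × (Sym2 (Fin n) → ℝ) => (p.1 i, p.1 k) :=
      ((measurable_pi_apply i).comp measurable_fst).prodMk
        ((measurable_pi_apply k).comp measurable_fst)
    have hWik : Measurable fun p : (Fin n → Ω) × (Sym2 (Fin n) → ℝ) => W (p.1 i) (p.1 k) :=
      hW.comp hpair
    exact measurableSet_lt hWik ((measurable_pi_apply s(i, k)).comp measurable_snd)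
  have : Aset μ W α i = {p : (Fin n → Ω) × (Sym2 (Fin n) → ℝ) | p.1 i ∈ Stmt.DW μ W α} ∩
      ⋂ (k : Fin n), ⋂ (_ : k ≠ i),
        {p : (Fin n → Ω) × (Sym2 (Fin n) → ℝ) | W (p.1 i) (p.1 k) < p.2 s(i, k)} := by
    ext p
    simp only [Aset, Set.mem_setOf_eq, Set.mem_inter_iff, Set.mem_iInter]
  rw [this]
  exact h1.inter (MeasurableSet.iInter fun k => MeasurableSet.iInter fun _ => h2 k)

lemma Aset_isolated (μ : Measure Ω) (hW : Stmt.IsGraphon W) (α : ℝ) {n : ℕ} (i : Fin n)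
    {p : (Fin n → Ω) × (Sym2 (Fin n) → ℝ)} (hp : p ∈ Aset μ W α i) :
    ∀ w, ¬ (Stmt.sampleGraph W n p).Adj i w := by
  intro w hadj
  rw [Stmt.sampleGraph, SimpleGraph.fromRel_adj] at hadj
  obtain ⟨hne, h⟩ := hadj
  have hlt := hp.2 w (Ne.symm hne)
  rcases h with h | h
  · exact absurd h (not_le.2 hlt)
  · rw [Sym2.eq_swap, hW.2.1 (p.1 w) (p.1 i)] at h
    exact absurd h (not_le.2 hlt)

lemma Aset_lower (μ : Measure Ω) [IsProbabilityMeasure μ] (hW : Stmt.IsGraphon W)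
    {α : ℝ} (hα0 : 0 ≤ α) (hα1 : α ≤ 1) {n : ℕ} (i : Fin (n+1)) :
    μ (Stmt.DW μ W α) * ENNReal.ofReal ((1-α)^n)
      ≤ Stmt.sampleMeasure μ (n+1) (Aset μ W α i) := by
  have Wm := hW.1
  have Wsym := hW.2.1
  have Wmem := hW.2.2
  set D := Stmt.DW μ W α with hD
  have hDm : MeasurableSet D := measurableSet_DW μ Wm α
  -- step 1: Fubini over the edge labels
  have step1 : Stmt.sampleMeasure μ (n+1) (Aset μ W α i)
      = ∫⁻ x : Fin (n+1) → Ω,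
          (D.indicator (fun _ => (1 : ℝ≥0∞)) (x i)) *
            ∏ k ∈ Finset.univ.erase i, ENNReal.ofReal (1 - W (x i) (x k))
          ∂(Measure.pi fun _ : Fin (n+1) => μ) := by
    rw [Stmt.sampleMeasure, Measure.prod_apply (measurableSet_Aset μ Wm α i)]
    refine lintegral_congr fun x => ?_
    by_cases hxD : x i ∈ D
    · have : Prod.mk x ⁻¹' Aset μ W α i
          = {u : Sym2 (Fin (n+1)) → ℝ | ∀ k, k ≠ i → W (x i) (x k) < u s(i, k)} := by
        ext u
        simp [Aset, show x i ∈ DW μ W α from hxD]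
      rw [this]
      have := nuI_pi_cylinder i (fun k => W (x i) (x k)) (fun k => Wmem (x i) (x k))
      rw [show (Measure.pi fun _ : Sym2 (Fin (n+1)) => volume.restrict (Set.Icc (0:ℝ) 1))
          = (Measure.pi fun _ : Sym2 (Fin (n+1)) => nuI) from rfl, this,
        Set.indicator_of_mem hxD, one_mul]
    · have : Prod.mk x ⁻¹' Aset μ W α i = (∅ : Set (Sym2 (Fin (n+1)) → ℝ)) := by
        ext u
        simp [Aset, show x i ∉ DW μ W α from hxD]
      rw [this, measure_empty, Set.indicator_of_notMem hxD, zero_mul]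
  -- step 2: split off coordinate i
  set F : Ω × (Fin n → Ω) → ℝ≥0∞ :=
    fun w => (D.indicator (fun _ => (1 : ℝ≥0∞)) w.1) *
      ∏ j : Fin n, ENNReal.ofReal (1 - W w.1 (w.2 j)) with hF
  have hFm : Measurable F := by
    refine Measurable.mul ?_ ?_
    · exact (measurable_const.indicator hDm).comp measurable_fst
    · exact Finset.measurable_prod Finset.univ fun (j : Fin n) _ =>
        ENNReal.measurable_ofReal.comp
          (measurable_const.sub (Wm.comp (measurable_fst.prodMk
            ((measurable_pi_apply j).comp measurable_snd))))
  have step2 : ∫⁻ x : Fin (n+1) → Ω,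
          (D.indicator (fun _ => (1 : ℝ≥0∞)) (x i)) *
            ∏ k ∈ Finset.univ.erase i, ENNReal.ofReal (1 - W (x i) (x k))
          ∂(Measure.pi fun _ : Fin (n+1) => μ)
      = ∫⁻ w, F w ∂(μ.prod (Measure.pi fun _ : Fin n => μ)) := by
    rw [← (measurePreserving_piFinSuccAbove (fun _ : Fin (n+1) => μ) i).lintegral_comp hFm]
    refine lintegral_congr fun x => ?_
    have he : (MeasurableEquiv.piFinSuccAbove (fun _ : Fin (n+1) => Ω) i) x
        = (x i, fun j => x (i.succAbove j)) := rfl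
    rw [he, hF]
    simp only
    rw [prod_erase_succAbove i (fun k => ENNReal.ofReal (1 - W (x i) (x k)))]
  -- step 3: Fubini over the remaining coordinates
  have hinner : ∀ y : Ω,
      ∫⁻ z : Fin n → Ω, ∏ j : Fin n, ENNReal.ofReal (1 - W y (z j))
          ∂(Measure.pi fun _ : Fin n => μ)
        = (ENNReal.ofReal (1 - Stmt.degW μ W y))^n := by
    intro y
    have hWy : Measurable (W y) := Wm.comp (measurable_prodMk_left)
    have hint : Integrable (W y) μ := by
      refine Integrable.mono' (integrable_const 1) hWy.aestronglyMeasurable ?_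
      refine Filter.Eventually.of_forall fun ω => ?_
      rw [Real.norm_eq_abs, abs_le]
      obtain ⟨h0, h1⟩ := Wmem y ω
      constructor <;> linarith
    rw [lintegral_pi_prod μ (fun _ => fun ω => ENNReal.ofReal (1 - W y ω))
      (fun _ => ENNReal.measurable_ofReal.comp (measurable_const.sub hWy))]
    rw [Finset.prod_const, Finset.card_univ, Fintype.card_fin]
    congr 1
    have hint2 : Integrable (fun ω => 1 - W y ω) μ := (integrable_const 1).sub hint
    rw [← ofReal_integral_eq_lintegral_ofReal hint2
      (Filter.Eventually.of_forall fun ω => by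
        have h2 := (Wmem y ω).2
        show (0:ℝ) ≤ 1 - W y ω
        linarith)]
    congr 1
    rw [integral_sub (integrable_const 1) hint]
    simp [Stmt.degW]
  have step3 : ∫⁻ w, F w ∂(μ.prod (Measure.pi fun _ : Fin n => μ))
      = ∫⁻ y, (D.indicator (fun _ => (1 : ℝ≥0∞)) y) *
          (ENNReal.ofReal (1 - Stmt.degW μ W y))^n ∂μ := by
    rw [lintegral_prod F hFm.aemeasurable]
    refine lintegral_congr fun y => ?_
    rw [hF]
    simp only
    have hmeas : Measurable fun z : Fin n → Ω => ∏ j : Fin n, ENNReal.ofReal (1 - W y (z j)) := by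
      refine Finset.measurable_prod Finset.univ fun (j : Fin n) _ => ?_
      exact ENNReal.measurable_ofReal.comp
        (measurable_const.sub ((Wm.comp measurable_prodMk_left).comp (measurable_pi_apply j)))
    rw [lintegral_const_mul _ hmeas, hinner y]
  -- step 4: lower bound the remaining integral
  rw [step1, step2, step3]
  have hbound : ∀ y : Ω, D.indicator (fun _ => ENNReal.ofReal ((1-α)^n)) y
      ≤ (D.indicator (fun _ => (1 : ℝ≥0∞)) y) *
          (ENNReal.ofReal (1 - Stmt.degW μ W y))^n := by
    intro y
    by_cases hy : y ∈ D
    · have hdy : Stmt.degW μ W y ≤ α := hy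
      rw [Set.indicator_of_mem hy, Set.indicator_of_mem hy, one_mul,
        ← ENNReal.ofReal_pow (by linarith)]
      refine ENNReal.ofReal_le_ofReal ?_
      exact pow_le_pow_left₀ (by linarith) (by linarith) n
    · rw [Set.indicator_of_notMem hy, Set.indicator_of_notMem hy, zero_mul]
  calc μ D * ENNReal.ofReal ((1-α)^n)
      = ∫⁻ y, D.indicator (fun _ => ENNReal.ofReal ((1-α)^n)) y ∂μ := by
        rw [lintegral_indicator_const hDm, mul_comm]
    _ ≤ _ := lintegral_mono hbound

instance inst_s2 : IsProbabilityMeasure (volume.restrict (Set.Icc (0:ℝ) 1)) :=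
  ⟨by rw [Measure.restrict_apply_univ, Real.volume_Icc]; norm_num⟩

instance sampleMeasure_prob (μ : Measure Ω) [IsProbabilityMeasure μ] (n : ℕ) :
    IsProbabilityMeasure (Stmt.sampleMeasure μ n) := by
  unfold Stmt.sampleMeasure; infer_instance

lemma Aset_pair (μ : Measure Ω) [IsProbabilityMeasure μ]
    (hW : Measurable (Function.uncurry W)) (α : ℝ) {n : ℕ} {i j : Fin n} (hij : i ≠ j) :
    Stmt.sampleMeasure μ n (Aset μ W α i ∩ Aset μ W α j)
      ≤ μ (Stmt.DW μ W α) * μ (Stmt.DW μ W α) := by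
  classical
  set D := Stmt.DW μ W α with hD
  set B : Fin n → Set Ω := fun k => if k = i then D else if k = j then D else Set.univ with hB
  have hsub : Aset μ W α i ∩ Aset μ W α j ⊆ (Set.pi Set.univ B) ×ˢ Set.univ := by
    rintro p ⟨hp1, hp2⟩
    refine ⟨fun k _ => ?_, Set.mem_univ _⟩
    simp only [hB]
    by_cases hk : k = i
    · subst hk; simp only [if_pos rfl]; exact hp1.1
    · by_cases hk' : k = j
      · subst hk'; simp only [if_neg hk, if_pos rfl]; exact hp2.1
      · simp [hk, hk']
  refine le_trans (measure_mono hsub) ?_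
  rw [Stmt.sampleMeasure, Measure.prod_prod, measure_univ, mul_one, Measure.pi_pi]
  have h1 : ∏ k, μ (B k) = (∏ k ∈ Finset.univ \ {i, j}, μ (B k)) * ∏ k ∈ {i, j}, μ (B k) :=
    (Finset.prod_sdiff (Finset.subset_univ _)).symm
  rw [h1, Finset.prod_eq_one (fun k hk => by
      obtain ⟨-, hk2⟩ := Finset.mem_sdiff.1 hk
      simp only [Finset.mem_insert, Finset.mem_singleton, not_or] at hk2
      simp [hB, hk2.1, hk2.2]),
    one_mul, Finset.prod_pair hij]
  simp [hB, hij.symm]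

lemma bonferroni {X : Type*} [MeasurableSpace X] (μ : Measure X) {I : Type*} [DecidableEq I]
    (A : I → Set X) (hA : ∀ i, MeasurableSet (A i)) (s : Finset I) :
    ∑ i ∈ s, μ (A i) ≤ μ (⋃ i ∈ s, A i) + ∑ i ∈ s, ∑ j ∈ s.erase i, μ (A i ∩ A j) := by
  classical
  induction s using Finset.induction with
  | empty => simp
  | @insert a s ha ih =>
    have hU : MeasurableSet (⋃ i ∈ s, A i) := s.measurableSet_biUnion fun i _ => hA i
    rw [Finset.sum_insert ha]
    calc μ (A a) + ∑ i ∈ s, μ (A i)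
        ≤ μ (A a) + (μ (⋃ i ∈ s, A i) + ∑ i ∈ s, ∑ j ∈ s.erase i, μ (A i ∩ A j)) :=
          add_le_add_right ih _
      _ = (μ (A a) + μ (⋃ i ∈ s, A i)) + ∑ i ∈ s, ∑ j ∈ s.erase i, μ (A i ∩ A j) := by ring
      _ = (μ (A a ∪ ⋃ i ∈ s, A i) + μ (A a ∩ ⋃ i ∈ s, A i))
            + ∑ i ∈ s, ∑ j ∈ s.erase i, μ (A i ∩ A j) := by
          rw [measure_union_add_inter _ hU]
      _ ≤ (μ (⋃ i ∈ insert a s, A i) + ∑ j ∈ s, μ (A a ∩ A j))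
            + ∑ i ∈ s, ∑ j ∈ s.erase i, μ (A i ∩ A j) := by
          refine add_le_add_left (add_le_add ?_ ?_) _
          · rw [Finset.set_biUnion_insert]
          · rw [Set.inter_iUnion₂]
            exact measure_biUnion_finset_le s _
      _ ≤ μ (⋃ i ∈ insert a s, A i) + ∑ i ∈ insert a s, ∑ j ∈ (insert a s).erase i, μ (A i ∩ A j) := by
          rw [add_assoc]
          refine add_le_add_right ?_ _
          rw [Finset.sum_insert ha, Finset.erase_insert ha]
          refine add_le_add_right ?_ _
          refine Finset.sum_le_sum fun i hi => ?_
          refine Finset.sum_le_sum_of_subset ?_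
          intro j hj
          rw [Finset.mem_erase] at hj ⊢
          exact ⟨hj.1, Finset.mem_insert_of_mem hj.2⟩

lemma one_sub_inv_pow_ge {n : ℕ} (hn : 2 ≤ n) : (1:ℝ)/8 ≤ (1 - 1/(n:ℝ))^(n-1) := by
  have hn0 : (0:ℝ) < n := by positivity
  have hn2 : (2:ℝ) ≤ n := by exact_mod_cast hn
  set x : ℝ := 1/(n:ℝ) with hx
  have hx0 : 0 < x := by positivity
  have hx2 : x ≤ 1/2 := by
    rw [hx, div_le_div_iff₀ hn0 (by norm_num)]
    linarith
  have h1 : Real.exp (-(2*x)) ≤ 1 - x := by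
    have h2 : 1 + 2*x ≤ Real.exp (2*x) := by
      have := Real.add_one_le_exp (2*x); linarith
    rw [Real.exp_neg]
    calc (Real.exp (2*x))⁻¹ ≤ (1 + 2*x)⁻¹ := by
          exact inv_anti₀ (by linarith) h2
      _ ≤ 1 - x := by
          rw [inv_eq_one_div, div_le_iff₀ (by linarith : (0:ℝ) < 1 + 2*x)]
          nlinarith
  have h3 : Real.exp (-(2*x)) ^ (n-1) ≤ (1 - x)^(n-1) :=
    pow_le_pow_left₀ (Real.exp_pos _).le h1 (n-1)
  have h4 : Real.exp (-(2*x)) ^ (n-1) = Real.exp ((n-1 : ℕ) * (-(2*x))) := by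
    rw [Real.exp_nat_mul]
  have hcast : ((n-1 : ℕ) : ℝ) = (n:ℝ) - 1 := by
    have h1n : 1 ≤ n := le_trans (by norm_num) hn
    rw [Nat.cast_sub h1n, Nat.cast_one]
  have h5 : (-2 : ℝ) ≤ ((n:ℝ) - 1) * (-(2*x)) := by
    have hxn : ((n:ℝ) - 1) * (-(2*x)) = -2 + 2/(n:ℝ) := by
      rw [hx]; field_simp; ring
    rw [hxn]
    have hp : (0:ℝ) < 2/(n:ℝ) := by positivity
    linarith
  have h6 : Real.exp (-2 : ℝ) ≤ Real.exp ((n-1 : ℕ) * (-(2*x))) := by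
    rw [hcast]
    exact Real.exp_le_exp.2 h5
  have h7 : (1:ℝ)/8 ≤ Real.exp (-2 : ℝ) := by
    rw [Real.exp_neg]
    rw [show (2:ℝ) = 1 + 1 by norm_num, Real.exp_add]
    rw [inv_eq_one_div, div_le_div_iff₀ (by positivity) (by norm_num)]
    nlinarith [Real.exp_one_lt_d9, Real.exp_pos 1]
  calc (1:ℝ)/8 ≤ Real.exp (-2:ℝ) := h7
    _ ≤ Real.exp ((n-1 : ℕ) * (-(2*x))) := h6
    _ = Real.exp (-(2*x)) ^ (n-1) := h4.symm
    _ ≤ (1 - x)^(n-1) := h3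

lemma assembled (μ : Measure Ω) [IsProbabilityMeasure μ] (hW : Stmt.IsGraphon W)
    {α : ℝ} (hα0 : 0 ≤ α) (hα1 : α ≤ 1) {n : ℕ} (m : ℕ) (hmn : m ≤ n + 1) :
    (m:ℝ) * ((μ (Stmt.DW μ W α)).toReal * (1-α)^n)
        - (m:ℝ)^2 * (μ (Stmt.DW μ W α)).toReal^2
      ≤ Stmt.graphProb μ W (n+1) (fun G => ∃ v, ∀ w, ¬ G.Adj v w) := by
  classical
  set D := Stmt.DW μ W α with hD
  set sm := Stmt.sampleMeasure μ (n+1) with hsm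
  set E : Set ((Fin (n+1) → Ω) × (Sym2 (Fin (n+1)) → ℝ)) :=
    {p | ∃ v, ∀ w, ¬ (Stmt.sampleGraph W (n+1) p).Adj v w} with hE
  obtain ⟨s, -, hs_card⟩ := Finset.exists_subset_card_eq
    (show m ≤ (Finset.univ : Finset (Fin (n+1))).card by simpa using hmn)
  have hsubE : (⋃ i ∈ s, Aset μ W α i) ⊆ E := by
    intro p hp
    rw [Set.mem_iUnion₂] at hp
    obtain ⟨i, -, hpi⟩ := hp
    exact ⟨i, Aset_isolated μ hW α i hpi⟩
  have key : (m : ℝ≥0∞) * (μ D * ENNReal.ofReal ((1-α)^n))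
      ≤ sm E + (m : ℝ≥0∞) * ((m : ℝ≥0∞) * (μ D * μ D)) := by
    calc (m : ℝ≥0∞) * (μ D * ENNReal.ofReal ((1-α)^n))
        = s.card • (μ D * ENNReal.ofReal ((1-α)^n)) := by
          rw [hs_card, nsmul_eq_mul]
      _ ≤ ∑ i ∈ s, sm (Aset μ W α i) :=
          Finset.card_nsmul_le_sum s _ _ (fun i _ => Aset_lower μ hW hα0 hα1 i)
      _ ≤ sm (⋃ i ∈ s, Aset μ W α i) + ∑ i ∈ s, ∑ j ∈ s.erase i, sm (Aset μ W α i ∩ Aset μ W α j) :=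
          bonferroni sm _ (fun i => measurableSet_Aset μ hW.1 α i) s
      _ ≤ sm E + (m : ℝ≥0∞) * ((m : ℝ≥0∞) * (μ D * μ D)) := by
          refine add_le_add (measure_mono hsubE) ?_
          calc ∑ i ∈ s, ∑ j ∈ s.erase i, sm (Aset μ W α i ∩ Aset μ W α j)
              ≤ ∑ i ∈ s, (m : ℝ≥0∞) * (μ D * μ D) := by
                refine Finset.sum_le_sum fun i _ => ?_
                calc ∑ j ∈ s.erase i, sm (Aset μ W α i ∩ Aset μ W α j)
                    ≤ (s.erase i).card • (μ D * μ D) :=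
                      Finset.sum_le_card_nsmul _ _ _ (fun j hj =>
                        Aset_pair μ hW.1 α (Ne.symm (Finset.mem_erase.1 hj).1))
                  _ ≤ (m : ℝ≥0∞) * (μ D * μ D) := by
                      rw [nsmul_eq_mul]
                      refine mul_le_mul' ?_ le_rfl
                      exact_mod_cast Nat.cast_le.2 (le_trans (Finset.card_erase_le)
                        (le_of_eq hs_card))
            _ = s.card • ((m : ℝ≥0∞) * (μ D * μ D)) := by rw [Finset.sum_const]
            _ = (m : ℝ≥0∞) * ((m : ℝ≥0∞) * (μ D * μ D)) := by rw [hs_card, nsmul_eq_mul]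
  -- pass to real numbers
  have hDfin : μ D ≠ ⊤ := measure_ne_top μ D
  have hEfin : sm E ≠ ⊤ := measure_ne_top sm E
  have hRfin : sm E + (m : ℝ≥0∞) * ((m : ℝ≥0∞) * (μ D * μ D)) ≠ ⊤ := by
    refine ENNReal.add_ne_top.2 ⟨hEfin, ?_⟩
    exact ENNReal.mul_ne_top (ENNReal.natCast_ne_top m)
      (ENNReal.mul_ne_top (ENNReal.natCast_ne_top m) (ENNReal.mul_ne_top hDfin hDfin))
  have hreal := ENNReal.toReal_mono hRfin key
  rw [ENNReal.toReal_add hEfin (ENNReal.mul_ne_top (ENNReal.natCast_ne_top m)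
      (ENNReal.mul_ne_top (ENNReal.natCast_ne_top m) (ENNReal.mul_ne_top hDfin hDfin)))] at hreal
  simp only [ENNReal.toReal_mul, ENNReal.toReal_natCast,
    ENNReal.toReal_ofReal (pow_nonneg (by linarith : (0:ℝ) ≤ 1 - α) n)] at hreal
  have hgp : Stmt.graphProb μ W (n+1) (fun G => ∃ v, ∀ w, ¬ G.Adj v w) = (sm E).toReal := rfl
  rw [hgp]
  nlinarith [hreal]

lemma assembled_one (μ : Measure Ω) [IsProbabilityMeasure μ] (hW : Stmt.IsGraphon W)
    {α : ℝ} (hα0 : 0 ≤ α) (hα1 : α ≤ 1) {n : ℕ} :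
    (μ (Stmt.DW μ W α)).toReal * (1-α)^n
      ≤ Stmt.graphProb μ W (n+1) (fun G => ∃ v, ∀ w, ¬ G.Adj v w) := by
  set sm := Stmt.sampleMeasure μ (n+1) with hsm
  set E : Set ((Fin (n+1) → Ω) × (Sym2 (Fin (n+1)) → ℝ)) :=
    {p | ∃ v, ∀ w, ¬ (Stmt.sampleGraph W (n+1) p).Adj v w} with hE
  have h1 : μ (Stmt.DW μ W α) * ENNReal.ofReal ((1-α)^n) ≤ sm (Aset μ W α 0) :=
    Aset_lower μ hW hα0 hα1 (0 : Fin (n+1))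
  have h2 : sm (Aset μ W α 0) ≤ sm E :=
    measure_mono (fun p hp => ⟨0, Aset_isolated μ hW α 0 hp⟩)
  have h3 := ENNReal.toReal_mono (measure_ne_top sm E) (h1.trans h2)
  rw [ENNReal.toReal_mul, ENNReal.toReal_ofReal (pow_nonneg (by linarith) n)] at h3
  exact h3

lemma graphProb_le_one (μ : Measure Ω) [IsProbabilityMeasure μ] (W : Ω → Ω → ℝ) (n : ℕ)
    (P : SimpleGraph (Fin n) → Prop) : Stmt.graphProb μ W n P ≤ 1 := by
  rw [Stmt.graphProb]
  have h := prob_le_one (μ := Stmt.sampleMeasure μ n) (s := {p | P (Stmt.sampleGraph W n p)})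
  calc (Stmt.sampleMeasure μ n {p | P (Stmt.sampleGraph W n p)}).toReal
      ≤ (1 : ℝ≥0∞).toReal := ENNReal.toReal_mono ENNReal.one_ne_top h
    _ = 1 := by simp

end Step

end Helpers

/-- If `liminf_{α↓0} μ(D_W(α))/α > 0`, then the probability that `G(n,W)` contains an
isolated vertex is bounded away from `0`. -/
theorem isolated_vertex_of_heavy_tail
    [StandardBorelSpace Ω] (μ : Measure Ω) [IsProbabilityMeasure μ] [NullSingletonClass μ]
    (W : Ω → Ω → ℝ) (hW : IsGraphon W)
    (hdeg : 0 < liminf (fun α : ℝ => (μ (DW μ W α)).toReal / α) (nhdsWithin 0 (Set.Ioi 0))) :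
    0 < liminf (fun n : ℕ => graphProb μ W n fun G => ∃ v, ∀ w, ¬ G.Adj v w) atTop := by
  classical
  -- extract a constant `c > 0` and a threshold `ε > 0` from the liminf hypothesis
  rw [liminf_eq] at hdeg
  set S := {a : ℝ | ∀ᶠ α in nhdsWithin 0 (Set.Ioi 0),
    a ≤ (μ (DW μ W α)).toReal / α} with hS
  have hSne : S.Nonempty := by
    by_contra h
    rw [Set.not_nonempty_iff_eq_empty] at h
    rw [h, Real.sSup_empty] at hdeg
    exact lt_irrefl 0 hdeg
  obtain ⟨c, hcS, hc0⟩ := exists_lt_of_lt_csSup hSne hdeg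
  rw [hS, Set.mem_setOf_eq, eventually_nhdsWithin_iff, Metric.eventually_nhds_iff] at hcS
  obtain ⟨ε, hε0, hε⟩ := hcS
  set t : ℝ := min (c/2) (1/64) with ht
  have ht0 : 0 < t := lt_min (by linarith) (by norm_num)
  have ht64 : t ≤ 1/64 := min_le_right _ _
  have htc : 2 * t ≤ c := by
    have := min_le_left (c/2) (1/64)
    linarith
  -- the liminf is at least `t/16 > 0`
  have hbdd : IsBoundedUnder (· ≤ ·) atTop
      (fun n : ℕ => graphProb μ W n fun G => ∃ v, ∀ w, ¬ G.Adj v w) :=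
    ⟨1, Filter.eventually_map.2 (Filter.Eventually.of_forall fun n =>
      graphProb_le_one μ W n _)⟩
  refine lt_of_lt_of_le (by positivity : (0:ℝ) < t/16)
    (Filter.le_liminf_of_le hbdd.isCoboundedUnder_ge ?_)
  filter_upwards [Filter.eventually_ge_atTop (max 2 (⌈1/ε⌉₊ + 1))] with n hn
  have hn2 : 2 ≤ n := le_trans (le_max_left _ _) hn
  have hnε : 1/ε < (n:ℝ) := by
    have h1 : (⌈1/ε⌉₊ + 1 : ℕ) ≤ n := le_trans (le_max_right _ _) hn
    have h2 : (1:ℝ)/ε ≤ (⌈1/ε⌉₊ : ℝ) := Nat.le_ceil _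
    have h3 : ((⌈1/ε⌉₊ + 1 : ℕ) : ℝ) ≤ (n:ℝ) := by exact_mod_cast h1
    push_cast at h3
    linarith
  obtain ⟨n', rfl⟩ : ∃ n', n = n' + 1 := ⟨n - 1, by omega⟩
  have hn0 : (0:ℝ) < ((n'+1 : ℕ):ℝ) := by positivity
  set α : ℝ := 1/((n'+1 : ℕ):ℝ) with hα
  have hα0 : 0 < α := by positivity
  have hα1 : α ≤ 1 := by
    rw [hα, div_le_one hn0]
    have : (1:ℝ) ≤ ((n'+1:ℕ):ℝ) := by exact_mod_cast Nat.one_le_iff_ne_zero.2 (by omega)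
    linarith
  have hαε : dist α 0 < ε := by
    rw [Real.dist_eq, sub_zero, abs_of_pos hα0, hα, div_lt_iff₀ hn0]
    calc (1:ℝ) = ε * (1/ε) := by field_simp
      _ < ε * ((n'+1:ℕ):ℝ) := by
          exact mul_lt_mul_of_pos_left hnε hε0
  have hq' := hε hαε (Set.mem_Ioi.2 hα0)
  set q : ℝ := (μ (DW μ W α)).toReal with hqdef
  have hq : c * α ≤ q := by
    rw [le_div_iff₀ hα0] at hq'
    linarith [hq']
  have hq0 : 0 < q := lt_of_lt_of_le (by positivity) hq
  have he8 : (1:ℝ)/8 ≤ (1 - α)^n' := by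
    have h := one_sub_inv_pow_ge (n := n'+1) (by exact_mod_cast hn2)
    simpa [hα] using h
  by_cases hqt : t ≤ q
  · -- large `q`: a single vertex suffices
    have h := assembled_one μ hW hα0.le hα1 (n := n')
    have h2 : t * (1/8) ≤ q * (1-α)^n' :=
      mul_le_mul hqt he8 (by norm_num) (by linarith)
    calc t/16 ≤ t * (1/8) := by linarith
      _ ≤ q * (1-α)^n' := h2
      _ ≤ _ := h
  · -- small `q`: second moment method with `m = ⌈t/q⌉` vertices
    push_neg at hqt
    set m : ℕ := ⌈t/q⌉₊ with hm
    have hm_low : t/q ≤ (m:ℝ) := Nat.le_ceil _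
    have hm_up : (m:ℝ) < t/q + 1 := Nat.ceil_lt_add_one (by positivity)
    have htq1 : 1 ≤ t/q := (one_le_div hq0).2 hqt.le
    have hm2 : (m:ℝ) ≤ 2*t/q := by
      have : t/q + 1 ≤ 2*t/q := by
        have h2 : 2*t/q = t/q + t/q := by ring
        rw [h2]; linarith
      linarith
    have hmn : m ≤ n' + 1 := by
      have h1 : (m:ℝ) ≤ ((n'+1:ℕ):ℝ) := by
        have h2 : 2*t/q ≤ 2*t/(c*α) := by
          apply div_le_div_of_nonneg_left (by linarith) (by positivity) hq
        have h3 : 2*t/(c*α) ≤ c/(c*α) := by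
          apply div_le_div_of_nonneg_right htc (by positivity)
        have h4 : c/(c*α) = 1/α := by field_simp
        have h5 : (1:ℝ)/α = ((n'+1:ℕ):ℝ) := by
          rw [hα]; field_simp
        calc (m:ℝ) ≤ 2*t/q := hm2
          _ ≤ 2*t/(c*α) := h2
          _ ≤ c/(c*α) := h3
          _ = ((n'+1:ℕ):ℝ) := by rw [h4, h5]
      exact_mod_cast h1
    have hA := assembled μ hW hα0.le hα1 m hmn
    have hmq_low : t ≤ (m:ℝ) * q := by
      rw [div_le_iff₀ hq0] at hm_low
      linarith
    have hmq_up : (m:ℝ) * q ≤ 2*t := by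
      rw [le_div_iff₀ hq0] at hm2
      exact hm2
    have h1 : t * (1/8) ≤ ((m:ℝ)*q) * ((1-α)^n') :=
      mul_le_mul hmq_low he8 (by norm_num) (by positivity)
    have h2 : ((m:ℝ)*q)^2 ≤ (2*t)^2 :=
      pow_le_pow_left₀ (by positivity) hmq_up 2
    have h2' : ((m:ℝ)*q)^2 ≤ 4*t^2 := by
      have : (2*t)^2 = 4*t^2 := by ring
      linarith [h2]
    have h3 : (m:ℝ) * (q * (1-α)^n') = ((m:ℝ)*q) * ((1-α)^n') := by ring
    have h4 : (m:ℝ)^2 * q^2 = ((m:ℝ)*q)^2 := by ring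
    rw [h3, h4] at hA
    have h5 : 4 * t^2 ≤ t/16 := by
      have h6 : t * t ≤ (1/64) * t := mul_le_mul_of_nonneg_right ht64 ht0.le
      nlinarith [h6]
    calc t/16 ≤ t * (1/8) - 4*t^2 := by linarith [h5]
      _ ≤ ((m:ℝ)*q) * ((1-α)^n') - ((m:ℝ)*q)^2 := by linarith [h1, h2']
      _ ≤ _ := hA

end Stmt
end

section
/- Let W be a graphon on an atomless standard probability space (Ω, μ). If W has a narrow peninsula, then lim_{n→∞} P[G(n,W) contains a Hamilton cycle] = 0. -/
open MeasureTheory Filter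

section NarrowPeninsulaHelpers

open MeasureTheory Filter ProbabilityTheory

/-- For a finite product of probability measures, the measure of a one-coordinate
cylinder set is the measure of the coordinate set. -/
lemma Stmt.pi_mem_one' {ι : Type*} [Fintype ι] [DecidableEq ι] {X : Type*} [MeasurableSpace X]
    (κ : ι → Measure X) [∀ i, IsProbabilityMeasure (κ i)]
    (i : ι) (s : Set X) :
    Measure.pi κ {x | x i ∈ s} = κ i s := by
  have h1 : {x : ι → X | x i ∈ s} = Set.pi Set.univ (fun k => if k = i then s else Set.univ) := by
    ext x
    simp only [Set.mem_setOf_eq, Set.mem_pi, Set.mem_univ, forall_true_left]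
    constructor
    · intro h k
      by_cases hk : k = i <;> simp [hk, h]
    · intro h
      have := h i
      simpa using this
  rw [h1, Measure.pi_pi]
  rw [Finset.prod_eq_single i (fun k _ hk => by simp [hk]) (by simp)]
  simp

/-- Two-coordinate cylinder sets of a finite product of probability measures. -/
lemma Stmt.pi_mem_two' {ι : Type*} [Fintype ι] [DecidableEq ι] {X : Type*} [MeasurableSpace X]
    (κ : ι → Measure X) [∀ i, IsProbabilityMeasure (κ i)]
    {i j : ι} (hij : i ≠ j) (s t : Set X) :
    Measure.pi κ {x | x i ∈ s ∧ x j ∈ t} = κ i s * κ j t := by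
  classical
  have h1 : {x : ι → X | x i ∈ s ∧ x j ∈ t} =
      Set.pi Set.univ (fun k => if k = i then s else if k = j then t else Set.univ) := by
    ext x
    simp only [Set.mem_setOf_eq, Set.mem_pi, Set.mem_univ, forall_true_left]
    constructor
    · intro h k
      by_cases hk : k = i
      · simp [hk, hij, h.1]
      · by_cases hk' : k = j <;> simp [hk, hk', hij.symm, h.2]
    · intro h
      have h1 := h i
      have h2 := h j
      simp [hij.symm] at h1 h2
      exact ⟨h1, h2⟩
  rw [h1, Measure.pi_pi]
  rw [← Finset.prod_subset (Finset.subset_univ ({i, j} : Finset ι))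
    (fun k _ hk => by simp only [Finset.mem_insert, Finset.mem_singleton, not_or] at hk
                      simp [hk.1, hk.2])]
  rw [Finset.prod_pair hij]
  simp [hij, hij.symm]

/-- The pushforward of a finite product of probability measures under a coordinate
evaluation is the coordinate measure. -/
lemma Stmt.map_eval_pi' {ι : Type*} [Fintype ι] [DecidableEq ι] {X : Type*} [MeasurableSpace X]
    (κ : ι → Measure X) [∀ i, IsProbabilityMeasure (κ i)] (i : ι) :
    Measure.map (fun x : ι → X => x i) (Measure.pi κ) = κ i := by
  apply Measure.ext
  intro s hs
  rw [Measure.map_apply (measurable_pi_apply i) hs]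
  exact Stmt.pi_mem_one' κ i s

/-- From a cyclic list `a :: t` (with `t` visiting every vertex exactly once and ending at `a`)
one can extract an injective "predecessor" map `g` with `R (g v) v` for every `v`. -/
lemma Stmt.exists_pred_inj' {α : Type*} [DecidableEq α] (R : α → α → Prop) (a : α) (t : List α)
    (hchain : (a :: t).Chain' R) (hnodup : t.Nodup) (hmem : ∀ v, v ∈ t)
    (hne : t ≠ []) (hlast : t.getLast hne = a) :
    ∃ g : α → α, Function.Injective g ∧ ∀ v, R (g v) v := by
  have htlen : 0 < t.length := List.length_pos_iff.2 hne
  have hlastElem : t[t.length - 1]'(by omega) = a := by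
    rw [← List.getLast_eq_getElem]; exact hlast
  have hidxlt : ∀ v, t.idxOf v < t.length := fun v => List.idxOf_lt_length_iff.2 (hmem v)
  refine ⟨fun v => (a :: t)[t.idxOf v]'(by simpa using Nat.lt_succ_of_lt (hidxlt v)), ?_, ?_⟩
  · intro v w hvw
    simp only at hvw
    have hkv := hidxlt v
    have hkw := hidxlt w
    have hidx : t.idxOf v = t.idxOf w := by
      by_contra hne'
      rcases Nat.eq_zero_or_pos (t.idxOf v) with h0v | h1v <;>
        rcases Nat.eq_zero_or_pos (t.idxOf w) with h0w | h1w
      · exact hne' (h0v.trans h0w.symm)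
      · obtain ⟨k, hk⟩ : ∃ k, t.idxOf w = k + 1 := ⟨t.idxOf w - 1, by omega⟩
        simp only [h0v, hk, List.getElem_cons_zero, List.getElem_cons_succ] at hvw
        have : k = t.length - 1 := hnodup.getElem_inj_iff.1 (hvw.symm.trans hlastElem.symm)
        omega
      · obtain ⟨k, hk⟩ : ∃ k, t.idxOf v = k + 1 := ⟨t.idxOf v - 1, by omega⟩
        simp only [h0w, hk, List.getElem_cons_zero, List.getElem_cons_succ] at hvw
        have : k = t.length - 1 := hnodup.getElem_inj_iff.1 (hvw.trans hlastElem.symm)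
        omega
      · obtain ⟨k, hk⟩ : ∃ k, t.idxOf v = k + 1 := ⟨t.idxOf v - 1, by omega⟩
        obtain ⟨k', hk'⟩ : ∃ k', t.idxOf w = k' + 1 := ⟨t.idxOf w - 1, by omega⟩
        simp only [hk, hk', List.getElem_cons_succ] at hvw
        have : k = k' := hnodup.getElem_inj_iff.1 hvw
        omega
    calc v = t[t.idxOf v]'hkv := (List.getElem_idxOf hkv).symm
      _ = t[t.idxOf w]'(hidx ▸ hkw) := by simp only [hidx]
      _ = w := List.getElem_idxOf hkw
  · intro v
    have hk := hidxlt v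
    have := List.isChain_iff_getElem.1 hchain (t.idxOf v) (by simp; omega)
    simp only [List.get_eq_getElem, List.getElem_cons_succ, List.getElem_idxOf hk] at this
    exact this

/-- In a Hamiltonian graph, if all the neighbours of the vertices of `S` lie in `T`,
then `|S| ≤ |T|`: the cycle predecessor of each vertex of `S` lies in `T`, and
predecessors along a Hamilton cycle are distinct. -/
lemma Stmt.ham_card_le' {n : ℕ} (hn : 2 ≤ n) (G : SimpleGraph (Fin n)) (hG : G.IsHamiltonian)
    (S T : Finset (Fin n)) (hST : ∀ v ∈ S, ∀ w, G.Adj v w → w ∈ T) :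
    S.card ≤ T.card := by
  obtain ⟨a, p, hp⟩ := hG (by simp; omega)
  have hlt : p.support = a :: p.support.tail := p.support_eq_cons
  have hchain : (a :: p.support.tail).Chain' G.Adj := hlt ▸ p.isChain_adj_support
  have hnodup : p.support.tail.Nodup := hp.isCycle.support_nodup
  have hcount : ∀ v, p.support.tail.count v = 1 :=
    (SimpleGraph.Walk.isHamiltonianCycle_iff_isCycle_and_support_count_tail_eq_one.1 hp).2
  have hmem : ∀ v : Fin n, v ∈ p.support.tail := fun v =>
    List.count_pos_iff.1 (by rw [hcount v]; norm_num)
  have hne : p.support.tail ≠ [] := List.ne_nil_of_mem (hmem a)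
  have hlast : p.support.tail.getLast hne = a := by
    rw [List.getLast_tail]; exact p.getLast_support
  obtain ⟨g, hginj, hgadj⟩ :=
    Stmt.exists_pred_inj' G.Adj a p.support.tail hchain hnodup hmem hne hlast
  apply Finset.card_le_card_of_injOn g
  · intro v hv
    exact hST v hv (g v) (hgadj v).symm
  · exact hginj.injOn

open scoped Classical in
/-- A weak law of large numbers type bound: the probability that, among `n` i.i.d. samples,
the number landing in `A` is at most the number landing in `C` is `O(1/n)` when
`μ C < μ A`, by Chebyshev's inequality. -/
lemma Stmt.count_prob' {Ω : Type} [MeasurableSpace Ω] {n : ℕ} (hn : 2 ≤ n) (μ : Measure Ω)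
    [IsProbabilityMeasure μ]
    {A C : Set Ω} (hA : MeasurableSet A) (hC : MeasurableSet C)
    (hm : (μ C).toReal < (μ A).toReal) :
    Measure.pi (fun _ : Fin n => μ)
      {x | (Finset.univ.filter (fun i => x i ∈ A)).card ≤
           (Finset.univ.filter (fun i => x i ∈ C)).card} ≤
      ENNReal.ofReal (1 / (((μ A).toReal - (μ C).toReal)^2 * n)) := by
  set m0 : ℝ := (μ A).toReal - (μ C).toReal with hm0
  have hm0pos : 0 < m0 := by rw [hm0]; linarith
  set π := Measure.pi (fun _ : Fin n => μ) with hπ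
  haveI : IsProbabilityMeasure π := by rw [hπ]; infer_instance
  set f : Ω → ℝ := fun ω => A.indicator (fun _ => (1:ℝ)) ω - C.indicator (fun _ => (1:ℝ)) ω with hf
  have hfmeas : Measurable f := ((measurable_const.indicator hA).sub
    (measurable_const.indicator hC))
  have hfbd : ∀ ω, |f ω| ≤ 1 := by
    intro ω
    rw [abs_le]
    by_cases hωA : ω ∈ A <;> by_cases hωC : ω ∈ C <;>
      simp [hf, hωA, hωC]
  set Y : Fin n → (Fin n → Ω) → ℝ := fun i x => f (x i) with hY
  have hYmeas : ∀ i, Measurable (Y i) := fun i => hfmeas.comp (measurable_pi_apply i)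
  have hYmem : ∀ i, MemLp (Y i) 2 π := fun i =>
    MemLp.of_bound (hYmeas i).aestronglyMeasurable 1 (Filter.Eventually.of_forall
      (fun x => by simpa using hfbd (x i)))
  have hmap : ∀ i : Fin n, Measure.map (fun x : Fin n → Ω => x i) π = μ := fun i =>
    Stmt.map_eval_pi' _ i
  have hmean : ∀ i, π[Y i] = m0 := by
    intro i
    have h1 : ∫ x, f (x i) ∂π = ∫ ω, f ω ∂μ := by
      rw [← hmap i, integral_map (measurable_pi_apply i).aemeasurable
        (by rw [hmap i]; exact hfmeas.aestronglyMeasurable)]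
    have h2 : ∫ ω, f ω ∂μ = m0 := by
      rw [hf]
      have iA : Integrable (A.indicator (fun _ => (1:ℝ))) μ :=
        (memLp_indicator_const 1 hA (1:ℝ) (Or.inr (measure_ne_top μ A))).integrable le_rfl
      have iC : Integrable (C.indicator (fun _ => (1:ℝ))) μ :=
        (memLp_indicator_const 1 hC (1:ℝ) (Or.inr (measure_ne_top μ C))).integrable le_rfl
      rw [integral_sub iA iC]
      have eA : ∫ ω, A.indicator (fun _ => (1:ℝ)) ω ∂μ = (μ A).toReal := by
        rw [integral_indicator_const (1:ℝ) hA]; simp [Measure.real]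
      have eC : ∫ ω, C.indicator (fun _ => (1:ℝ)) ω ∂μ = (μ C).toReal := by
        rw [integral_indicator_const (1:ℝ) hC]; simp [Measure.real]
      rw [eA, eC, hm0]
    exact h1.trans h2
  have hindep : Set.Pairwise ↑(Finset.univ : Finset (Fin n))
      (fun i j => IndepFun (Y i) (Y j) π) := by
    intro i _ j _ hij
    rw [indepFun_iff_measure_inter_preimage_eq_mul]
    intro s t hs ht
    have e1 : Y i ⁻¹' s = {x : Fin n → Ω | x i ∈ f ⁻¹' s} := rfl
    have e2 : Y j ⁻¹' t = {x : Fin n → Ω | x j ∈ f ⁻¹' t} := rfl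
    rw [e1, e2, ← Set.setOf_and, hπ, Stmt.pi_mem_two' _ hij, Stmt.pi_mem_one', Stmt.pi_mem_one']
  set X : (Fin n → Ω) → ℝ := ∑ i ∈ Finset.univ, Y i with hX
  have hXmem : MemLp X 2 π := memLp_finset_sum' _ (fun i _ => hYmem i)
  have hvar : variance X π ≤ n := by
    rw [hX, IndepFun.variance_sum (fun i _ => hYmem i) hindep]
    have : ∀ i : Fin n, variance (Y i) π ≤ 1 := by
      intro i
      refine (variance_le_expectation_sq (hYmeas i).aestronglyMeasurable).trans ?_
      have hint : Integrable (Y i ^ 2) π := (hYmem i).integrable_sq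
      have : π[Y i ^ 2] ≤ π[(fun _ => (1:ℝ))] := by
        apply integral_mono hint (integrable_const 1)
        intro x
        simp only [Pi.pow_apply]
        calc (Y i x)^2 = |Y i x|^2 := (sq_abs _).symm
          _ ≤ 1^2 := by
              apply pow_le_pow_left₀ (abs_nonneg _) (by simpa [hY] using hfbd (x i))
          _ = 1 := one_pow 2
      simpa using this
    calc ∑ i : Fin n, variance (Y i) π ≤ ∑ _i : Fin n, (1:ℝ) :=
          Finset.sum_le_sum (fun i _ => this i)
      _ = n := by simp
  have hXmean : π[X] = n * m0 := by
    have h0 : ∫ x, X x ∂π = ∫ x, ∑ i : Fin n, Y i x ∂π := by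
      congr 1
      ext x
      rw [hX, Finset.sum_apply]
    rw [h0, integral_finset_sum _ (fun i _ => ((hYmem i).integrable one_le_two))]
    simp [hmean]
  have hnpos : (0:ℝ) < n := by exact_mod_cast (show 0 < n by omega)
  have hsum : ∀ x : Fin n → Ω, X x =
      ((Finset.univ.filter (fun i => x i ∈ A)).card : ℝ) -
      ((Finset.univ.filter (fun i => x i ∈ C)).card : ℝ) := by
    intro x
    rw [hX, Finset.sum_apply]
    have : ∀ i : Fin n, Y i x =
        (if x i ∈ A then (1:ℝ) else 0) - (if x i ∈ C then (1:ℝ) else 0) := by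
      intro i
      simp [hY, hf, Set.indicator_apply]
    rw [Finset.sum_congr rfl (fun i _ => this i), Finset.sum_sub_distrib]
    rw [Finset.sum_boole, Finset.sum_boole]
  have hincl : {x : Fin n → Ω | (Finset.univ.filter (fun i => x i ∈ A)).card ≤
           (Finset.univ.filter (fun i => x i ∈ C)).card} ⊆
      {x | (n : ℝ) * m0 ≤ |X x - π[X]|} := by
    intro x hx
    simp only [Set.mem_setOf_eq] at hx ⊢
    have h1 : X x ≤ 0 := by
      rw [hsum x]
      have := (Nat.cast_le (α := ℝ)).2 hx
      linarith
    rw [hXmean, abs_sub_comm, abs_of_nonneg (by nlinarith)]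
    nlinarith
  have hcheb := meas_ge_le_variance_div_sq (μ := π) hXmem
    (c := (n : ℝ) * m0) (mul_pos hnpos hm0pos)
  calc π {x | (Finset.univ.filter (fun i => x i ∈ A)).card ≤
           (Finset.univ.filter (fun i => x i ∈ C)).card}
      ≤ π {x | (n : ℝ) * m0 ≤ |X x - π[X]|} := measure_mono hincl
    _ ≤ ENNReal.ofReal (variance X π / ((n:ℝ) * m0)^2) := hcheb
    _ ≤ ENNReal.ofReal (1 / (m0^2 * n)) := by
        apply ENNReal.ofReal_le_ofReal
        rw [div_le_div_iff₀ (pow_pos (mul_pos hnpos hm0pos) 2) (mul_pos (pow_pos hm0pos 2) hnpos)]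
        calc variance X π * (m0^2 * n) ≤ n * (m0^2 * n) := by
              apply mul_le_mul_of_nonneg_right hvar (by positivity)
          _ = 1 * ((n:ℝ) * m0)^2 := by ring
    _ = ENNReal.ofReal (1 / (((μ A).toReal - (μ C).toReal)^2 * n)) := by rw [hm0]

/-- The uniform distribution on `[0,1]` is a probability measure. -/
lemma Stmt.label_prob : IsProbabilityMeasure (volume.restrict (Set.Icc (0:ℝ) 1)) := by
  constructor
  rw [Measure.restrict_apply_univ]
  simp

end NarrowPeninsulaHelpers

namespace Stmt

variable {Ω : Type} [MeasurableSpace Ω]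

/-- The graphon `W` has a narrow peninsula. -/
def HasNarrowPeninsula (μ : Measure Ω) (W : Ω → Ω → ℝ) : Prop :=
  ∃ a : ℝ, a ∈ Set.Ioc (0:ℝ) (1/2) ∧ ∃ A B : Set Ω, MeasurableSet A ∧ MeasurableSet B ∧
    Disjoint A B ∧ ENNReal.ofReal a < μ A ∧ μ B = ENNReal.ofReal (1 - 2*a) ∧
    ∀ᵐ p ∂((μ.prod μ).restrict (A ×ˢ (A ∪ B))), W p.1 p.2 = 0

/-- If `W` has a narrow peninsula, then a.a.s. `G(n,W)` is not Hamiltonian. -/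
theorem not_hamiltonian_of_narrow_peninsula
    [StandardBorelSpace Ω] (μ : Measure Ω) [IsProbabilityMeasure μ] [NullSingletonClass μ]
    (W : Ω → Ω → ℝ) (hW : IsGraphon W)
    (hpen : HasNarrowPeninsula μ W) :
    Tendsto (fun n : ℕ => graphProb μ W n fun G => G.IsHamiltonian) atTop (nhds 0) := by
  classical
  obtain ⟨a, ⟨ha0, ha2⟩, A, B, hA, hB, hABdisj, hμA, hμB, hae⟩ := hpen
  haveI : IsProbabilityMeasure (volume.restrict (Set.Icc (0:ℝ) 1)) := Stmt.label_prob
  set C : Set Ω := (A ∪ B)ᶜ with hCdef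
  have hC : MeasurableSet C := (hA.union hB).compl
  set α : ℝ := (μ A).toReal with hα
  set γ : ℝ := (μ C).toReal with hγ
  -- basic facts about the masses
  have haα : a < α := by
    rw [hα]
    have := (ENNReal.toReal_lt_toReal ENNReal.ofReal_ne_top (measure_ne_top μ A)).2 hμA
    rwa [ENNReal.toReal_ofReal ha0.le] at this
  have hμAB : μ (A ∪ B) = μ A + μ B := measure_union hABdisj hB
  have hABle : μ (A ∪ B) ≤ 1 := prob_le_one
  have hμC : μ C = 1 - μ (A ∪ B) := by
    rw [hCdef, measure_compl (hA.union hB) (measure_ne_top _ _), measure_univ]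
  have hγval : γ = 2*a - α := by
    rw [hγ, hμC, ENNReal.toReal_sub_of_le hABle ENNReal.one_ne_top, hμAB,
      ENNReal.toReal_add (measure_ne_top _ _) (measure_ne_top _ _), hμB,
      ENNReal.toReal_ofReal (by linarith)]
    simp [hα]
    ring
  have hγα : γ < α := by rw [hγval]; linarith
  -- the key quantitative bound for n ≥ 2
  have key : ∀ n : ℕ, 2 ≤ n →
      sampleMeasure μ n {p | (sampleGraph W n p).IsHamiltonian} ≤
        ENNReal.ofReal (1 / ((α - γ)^2 * n)) := by
    intro n hn
    set Bad1 : Set (Fin n → Ω) :=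
      {x | (Finset.univ.filter (fun i => x i ∈ A)).card ≤
           (Finset.univ.filter (fun i => x i ∈ C)).card} with hBad1
    set E : Fin n → Fin n → Set ((Fin n → Ω) × (Sym2 (Fin n) → ℝ)) := fun i j =>
      {p | i ≠ j ∧ p.1 i ∈ A ∧ p.1 j ∈ A ∪ B ∧ p.2 s(i, j) ≤ W (p.1 i) (p.1 j)} with hE
    -- a Hamiltonian sample is "bad": either many peninsula vertices, or a forbidden edge
    have hincl : {p | (sampleGraph W n p).IsHamiltonian} ⊆
        (Bad1 ×ˢ Set.univ) ∪ ⋃ i, ⋃ j, E i j := by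
      intro p hp
      by_cases hEp : p ∈ ⋃ i, ⋃ j, E i j
      · exact Or.inr hEp
      left
      simp only [Set.mem_iUnion, hE, Set.mem_setOf_eq, not_exists] at hEp
      refine ⟨?_, Set.mem_univ _⟩
      rw [hBad1]
      simp only [Set.mem_setOf_eq] at hp ⊢
      refine Stmt.ham_card_le' hn _ hp _ _ ?_
      intro v hv w hadj
      simp only [Finset.mem_filter, Finset.mem_univ, true_and] at hv ⊢
      rw [hCdef, Set.mem_compl_iff]
      intro hwAB
      apply hEp v w
      refine ⟨hadj.ne, hv, hwAB, ?_⟩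
      rcases (SimpleGraph.fromRel_adj _ _ _).1 hadj with ⟨hne, h1 | h1⟩
      · exact h1
      · rw [hW.2.1 (p.1 v) (p.1 w), ← Sym2.eq_swap]
        exact h1
    -- each forbidden-edge event is null
    have hE0 : ∀ i j, sampleMeasure μ n (E i j) = 0 := by
      intro i j
      by_cases hij : i = j
      · have : E i j = ∅ := by
          ext p; simp [hE, hij]
        simp [this]
      set D : Set (Ω × Ω) := (A ×ˢ (A ∪ B)) ∩ {q | Function.uncurry W q ≠ 0} with hD
      have hDmeas : MeasurableSet D :=
        (hA.prod (hA.union hB)).inter ((hW.1 (measurableSet_singleton 0).compl))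
      have hD0 : (μ.prod μ) D = 0 := by
        have h1 := (ae_iff.1 hae)
        rw [Measure.restrict_apply₀] at h1
        · rw [hD, Set.inter_comm]
          exact h1
        · exact ((hW.1 (measurableSet_singleton 0).compl)).nullMeasurableSet
      have hmapij : Measure.map (fun x : Fin n → Ω => (x i, x j))
          (Measure.pi (fun _ : Fin n => μ)) = μ.prod μ := by
        refine (Measure.prod_eq ?_).symm
        intro s t hs ht
        rw [Measure.map_apply (by exact (measurable_pi_apply i).prodMk (measurable_pi_apply j))
          (hs.prod ht)]
        have : (fun x : Fin n → Ω => (x i, x j)) ⁻¹' (s ×ˢ t) = {x | x i ∈ s ∧ x j ∈ t} := by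
          ext x; simp [Set.mem_prod]
        rw [this, Stmt.pi_mem_two' _ hij]
      set S1 : Set (Fin n → Ω) := (fun x : Fin n → Ω => (x i, x j)) ⁻¹' D with hS1
      set S2 : Set (Sym2 (Fin n) → ℝ) := {u | u s(i, j) ∈ Set.Iic (0:ℝ)} with hS2
      have hsub : E i j ⊆ (S1 ×ˢ Set.univ) ∪ (Set.univ ×ˢ S2) := by
        intro p hp
        rw [hE] at hp
        obtain ⟨-, h1, h2, h3⟩ := hp
        by_cases hWz : W (p.1 i) (p.1 j) = 0
        · right
          refine ⟨Set.mem_univ _, ?_⟩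
          rw [hS2]
          simp only [Set.mem_setOf_eq, Set.mem_Iic]
          rw [hWz] at h3
          exact h3
        · left
          refine ⟨?_, Set.mem_univ _⟩
          rw [hS1]
          exact ⟨⟨h1, h2⟩, hWz⟩
      have hS1null : Measure.pi (fun _ : Fin n => μ) S1 = 0 := by
        rw [hS1, ← Measure.map_apply
          ((measurable_pi_apply i).prodMk (measurable_pi_apply j)) hDmeas, hmapij]
        exact hD0
      have hS2null :
          Measure.pi (fun _ : Sym2 (Fin n) => volume.restrict (Set.Icc (0:ℝ) 1)) S2 = 0 := by
        rw [hS2, Stmt.pi_mem_one' _ s(i,j) (Set.Iic (0:ℝ))]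
        rw [Measure.restrict_apply measurableSet_Iic]
        have : Set.Iic (0:ℝ) ∩ Set.Icc 0 1 = {0} := by
          ext x
          simp only [Set.mem_inter_iff, Set.mem_Iic, Set.mem_Icc, Set.mem_singleton_iff]
          constructor
          · rintro ⟨h1, h2, h3⟩; linarith
          · rintro rfl; norm_num
        rw [this]
        exact measure_singleton 0
      refine le_antisymm ?_ (by positivity)
      calc sampleMeasure μ n (E i j) ≤ sampleMeasure μ n ((S1 ×ˢ Set.univ) ∪ (Set.univ ×ˢ S2)) :=
            measure_mono hsub
        _ ≤ sampleMeasure μ n (S1 ×ˢ Set.univ) + sampleMeasure μ n (Set.univ ×ˢ S2) :=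
            measure_union_le _ _
        _ = 0 := by
            rw [sampleMeasure, Measure.prod_prod, Measure.prod_prod, hS1null, hS2null]
            simp
    -- the weak law of large numbers bound
    have hBad1bound : Measure.pi (fun _ : Fin n => μ) Bad1 ≤
        ENNReal.ofReal (1 / ((α - γ)^2 * n)) := by
      refine le_trans (measure_mono ?_) (Stmt.count_prob' hn μ hA hC hγα)
      rw [hBad1]
      intro x hx
      simp only [Set.mem_setOf_eq] at hx ⊢
      convert hx using 3
    calc sampleMeasure μ n {p | (sampleGraph W n p).IsHamiltonian}
        ≤ sampleMeasure μ n ((Bad1 ×ˢ Set.univ) ∪ ⋃ i, ⋃ j, E i j) := measure_mono hincl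
      _ ≤ sampleMeasure μ n (Bad1 ×ˢ Set.univ) + sampleMeasure μ n (⋃ i, ⋃ j, E i j) :=
          measure_union_le _ _
      _ = sampleMeasure μ n (Bad1 ×ˢ Set.univ) := by
          rw [measure_iUnion_null (fun i => measure_iUnion_null (fun j => hE0 i j))]
          simp
      _ = Measure.pi (fun _ : Fin n => μ) Bad1 := by
          rw [sampleMeasure, Measure.prod_prod]
          simp
      _ ≤ ENNReal.ofReal (1 / ((α - γ)^2 * n)) := hBad1bound
  -- conclude by squeezing
  have hm2 : 0 < (α - γ)^2 := pow_pos (by linarith) 2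
  apply squeeze_zero' (Filter.Eventually.of_forall (fun n => ENNReal.toReal_nonneg))
    (g := fun n : ℕ => 1 / ((α - γ)^2 * n))
  · filter_upwards [eventually_ge_atTop 2] with n hn
    show (sampleMeasure μ n {p | (sampleGraph W n p).IsHamiltonian}).toReal ≤
      1 / ((α - γ)^2 * n)
    calc (sampleMeasure μ n {p | (sampleGraph W n p).IsHamiltonian}).toReal
        ≤ (ENNReal.ofReal (1 / ((α - γ)^2 * n))).toReal :=
          ENNReal.toReal_mono ENNReal.ofReal_ne_top (key n hn)
      _ = 1 / ((α - γ)^2 * n) := ENNReal.toReal_ofReal (by positivity)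
  · have h1 := tendsto_one_div_atTop_nhds_zero_nat.const_mul (1 / (α - γ)^2)
    rw [mul_zero] at h1
    have h2 : (fun n : ℕ => 1 / ((α - γ)^2 * (n:ℝ))) = fun n : ℕ => 1 / (α - γ)^2 * (1 / n) := by
      funext n
      rw [div_mul_div_comm, one_mul]
    rw [h2]
    exact h1


end Stmt
end

section
/- Let G be a simple graph on n vertices. Then G admits a perfect fractional matching (a fractional matching of total weight n/2) if and only if G contains no narrow graph peninsula. -/
namespace Stmt

open Finset

variable {V : Type} [Fintype V] [DecidableEq V] (G : SimpleGraph V) [DecidableRel G.Adj]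

/-- Weighted handshake lemma. -/
lemma handshake (g : Sym2 V → ℝ) :
    ∑ v, ∑ w ∈ G.neighborFinset v, g s(v, w) = 2 * ∑ e ∈ G.edgeFinset, g e := by
  classical
  set P : Finset (V × V) := univ.filter (fun p : V × V => G.Adj p.1 p.2) with hP
  have h1 : ∑ v, ∑ w ∈ G.neighborFinset v, g s(v, w) = ∑ p ∈ P, g s(p.1, p.2) := by
    rw [hP, ← Finset.univ_product_univ, Finset.sum_filter, Finset.sum_product]
    refine Finset.sum_congr rfl fun v _ => ?_
    rw [← Finset.sum_filter]
    refine Finset.sum_congr ?_ fun _ _ => rfl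
    ext w; simp [SimpleGraph.mem_neighborFinset]
  have hmaps : ∀ p ∈ P, s(p.1, p.2) ∈ G.edgeFinset := by
    intro p hp
    simp only [hP, Finset.mem_filter] at hp
    simpa [SimpleGraph.mem_edgeFinset] using hp.2
  have h2 : ∑ e ∈ G.edgeFinset, ∑ p ∈ P.filter (fun p => s(p.1, p.2) = e), g e
      = ∑ p ∈ P, g s(p.1, p.2) := Finset.sum_fiberwise_of_maps_to' hmaps g
  have hfib : ∀ e ∈ G.edgeFinset, (P.filter (fun p => s(p.1, p.2) = e)).card = 2 := by
    intro e he
    induction e with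
    | _ a b =>
      rw [SimpleGraph.mem_edgeFinset, SimpleGraph.mem_edgeSet] at he
      have : P.filter (fun p => s(p.1, p.2) = s(a, b)) = {(a, b), (b, a)} := by
        ext p
        simp only [hP, Finset.mem_filter, Finset.mem_univ, true_and, Finset.mem_insert,
          Finset.mem_singleton, Sym2.eq_iff]
        constructor
        · rintro ⟨hadj, ⟨h1, h2⟩ | ⟨h1, h2⟩⟩
          · left; exact Prod.ext h1 h2
          · right; exact Prod.ext h1 h2
        · rintro (rfl | rfl)
          · exact ⟨he, Or.inl ⟨rfl, rfl⟩⟩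
          · exact ⟨he.symm, Or.inr ⟨rfl, rfl⟩⟩
      rw [this]
      rw [Finset.card_insert_of_notMem, Finset.card_singleton]
      simp only [Finset.mem_singleton]
      intro h
      exact (G.ne_of_adj he) (congrArg Prod.fst h)
  rw [h1, ← h2, Finset.mul_sum]
  refine Finset.sum_congr rfl fun e he => ?_
  rw [Finset.sum_const, hfib e he]
  ring

/-- No narrow peninsula implies the Hall condition for neighborhoods. -/
lemma hall_of_no_peninsula (n : ℕ) (hcard : Fintype.card V = n)
    (hno : ¬ ∃ (a : ℝ) (A B : Finset V), 0 < a ∧ a ≤ (n : ℝ) / 2 ∧ Disjoint A B ∧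
          a < (A.card : ℝ) ∧ (B.card : ℝ) = (n : ℝ) - 2 * a ∧
          ∀ u ∈ A, ∀ v ∈ A ∪ B, ¬ G.Adj u v) :
    ∀ S : Finset V, S.card ≤ (S.biUnion (fun v => G.neighborFinset v)).card := by
  intro S
  by_contra hS
  push_neg at hS
  set NS := S.biUnion (fun v => G.neighborFinset v) with hNS
  set A := S \ NS with hA
  set C := NS \ S with hC
  -- key adjacency property
  have hkey : ∀ u ∈ A, ∀ v, G.Adj u v → v ∈ C := by
    intro u hu v hadj
    rw [hA, Finset.mem_sdiff] at hu
    have hvNS : v ∈ NS := Finset.mem_biUnion.mpr ⟨u, hu.1, (SimpleGraph.mem_neighborFinset _ _ _).mpr hadj⟩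
    rw [hC, Finset.mem_sdiff]
    refine ⟨hvNS, fun hvS => ?_⟩
    exact hu.2 (Finset.mem_biUnion.mpr ⟨v, hvS, (SimpleGraph.mem_neighborFinset _ _ _).mpr hadj.symm⟩)
  have e1 : (S \ NS).card + (S ∩ NS).card = S.card := Finset.card_sdiff_add_card_inter S NS
  have e2 : (NS \ S).card + (NS ∩ S).card = NS.card := Finset.card_sdiff_add_card_inter NS S
  have hAC : C.card < A.card := by
    rw [hA, hC]
    rw [Finset.inter_comm] at e2
    omega
  have hdisjAC : Disjoint A C := by
    rw [Finset.disjoint_left]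
    intro u hu hu'
    rw [hA, Finset.mem_sdiff] at hu
    rw [hC, Finset.mem_sdiff] at hu'
    exact hu'.2 hu.1
  set B := (A ∪ C)ᶜ with hB
  have hABC : (A ∪ C).card = A.card + C.card := Finset.card_union_of_disjoint hdisjAC
  have hle : A.card + C.card ≤ n := by
    rw [← hABC, ← hcard]
    exact Finset.card_le_univ _
  have hBcard : B.card = n - (A.card + C.card) := by
    rw [hB, Finset.card_compl, hABC, hcard]
  apply hno
  refine ⟨(A.card + C.card : ℝ) / 2, A, B, ?_, ?_, ?_, ?_, ?_, ?_⟩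
  · have h0 : 0 < A.card := lt_of_le_of_lt (Nat.zero_le _) hAC
    have h0' : (0:ℝ) < A.card := by exact_mod_cast h0
    have h1 : (0:ℝ) ≤ C.card := by positivity
    linarith
  · have h2 : ((A.card + C.card : ℕ) : ℝ) ≤ (n : ℝ) := by exact_mod_cast hle
    push_cast at h2
    linarith
  · rw [Finset.disjoint_left]
    intro u hu hu'
    rw [hB, Finset.mem_compl] at hu'
    exact hu' (Finset.mem_union_left _ hu)
  · have : (C.card : ℝ) < A.card := by exact_mod_cast hAC
    linarith
  · have : (B.card : ℝ) = (n : ℝ) - (A.card + C.card) := by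
      rw [hBcard]
      push_cast [hle]
      ring
    rw [this]; ring
  · intro u hu v hv hadj
    have hvC := hkey u hu v hadj
    rcases Finset.mem_union.mp hv with h | h
    · exact (Finset.disjoint_left.mp hdisjAC h) hvC
    · rw [hB, Finset.mem_compl] at h
      exact h (Finset.mem_union_right _ hvC)

/-- A simple graph on `n` vertices has a perfect fractional matching (a fractional matching of
total weight `n/2`) if and only if it has no narrow graph peninsula, i.e. there is no
`a ∈ (0, n/2]` and disjoint vertex sets `A`, `B` with `|A| > a`, `|B| = n - 2a` such that no
edge has one endvertex in `A` and the other in `A ∪ B`. -/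
theorem perfect_fractional_matching_iff_no_narrow_peninsula {V : Type} [Fintype V]
    [DecidableEq V] (G : SimpleGraph V) [DecidableRel G.Adj] (n : ℕ)
    (hcard : Fintype.card V = n) :
    (∃ m : Sym2 V → ℝ, (∀ e, 0 ≤ m e ∧ m e ≤ 1) ∧
        (∀ v : V, ∑ w ∈ G.neighborFinset v, m s(v, w) ≤ 1) ∧
        ∑ e ∈ G.edgeFinset, m e = (n : ℝ) / 2) ↔
      ¬ ∃ (a : ℝ) (A B : Finset V), 0 < a ∧ a ≤ (n : ℝ) / 2 ∧ Disjoint A B ∧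
          a < (A.card : ℝ) ∧ (B.card : ℝ) = (n : ℝ) - 2 * a ∧
          ∀ u ∈ A, ∀ v ∈ A ∪ B, ¬ G.Adj u v := by
  constructor
  · rintro ⟨m, hm01, hload, htot⟩ ⟨a, A, B, ha0, han, hdisj, haA, hBcard, hedge⟩
    set L : V → ℝ := fun v => ∑ w ∈ G.neighborFinset v, m s(v, w) with hL
    have hhs : ∑ v, L v = (n : ℝ) := by
      rw [hL]
      simp only []
      rw [handshake G m, htot]
      ring
    set C := (A ∪ B)ᶜ with hC
    -- nonnegativity
    have hm0 : ∀ e, 0 ≤ m e := fun e => (hm01 e).1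
    -- cardinalities
    have hABn : A.card + B.card ≤ n := by
      rw [← Finset.card_union_of_disjoint hdisj, ← hcard]
      exact Finset.card_le_univ _
    have hAn : A.card ≤ n := le_trans (Nat.le_add_right _ _) hABn
    have hCcard : (C.card : ℝ) = (n : ℝ) - (A.card + B.card) := by
      rw [hC, Finset.card_compl, Finset.card_union_of_disjoint hdisj, hcard]
      push_cast [hABn]
      ring
    -- A's load is at least |A|
    have hAload : (A.card : ℝ) ≤ ∑ v ∈ A, L v := by
      have hsplit : ∑ v ∈ A, L v + ∑ v ∈ Aᶜ, L v = ∑ v, L v :=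
        Finset.sum_add_sum_compl A L
      have hAc : ∑ v ∈ Aᶜ, L v ≤ (Aᶜ.card : ℝ) := by
        calc ∑ v ∈ Aᶜ, L v ≤ ∑ _v ∈ Aᶜ, (1 : ℝ) := Finset.sum_le_sum fun v _ => hload v
          _ = Aᶜ.card := by rw [Finset.sum_const]; simp
      have hAcc : (Aᶜ.card : ℝ) = (n : ℝ) - A.card := by
        rw [Finset.card_compl, hcard]
        push_cast [hAn]
        ring
      rw [hhs] at hsplit
      rw [hAcc] at hAc
      linarith
    -- all neighbors of A lie in C
    have hN : ∀ v ∈ A, G.neighborFinset v = C.filter (fun w => G.Adj v w) := by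
      intro v hv
      ext w
      simp only [SimpleGraph.mem_neighborFinset, Finset.mem_filter, hC, Finset.mem_compl]
      constructor
      · intro hadj
        refine ⟨fun hw => hedge v hv w hw hadj, hadj⟩
      · exact fun h => h.2
    -- swap the double sum
    have hswap : ∑ v ∈ A, L v ≤ ∑ w ∈ C, L w := by
      calc ∑ v ∈ A, L v
          = ∑ v ∈ A, ∑ w ∈ C, (if G.Adj v w then m s(v, w) else 0) := by
            refine Finset.sum_congr rfl fun v hv => ?_
            rw [hL]
            simp only []
            rw [hN v hv, Finset.sum_filter]
        _ = ∑ w ∈ C, ∑ v ∈ A, (if G.Adj v w then m s(v, w) else 0) := Finset.sum_comm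
        _ ≤ ∑ w ∈ C, L w := by
            refine Finset.sum_le_sum fun w _ => ?_
            rw [← Finset.sum_filter]
            have hsub : A.filter (fun v => G.Adj v w) ⊆ G.neighborFinset w := by
              intro v hv
              rw [SimpleGraph.mem_neighborFinset]
              exact (Finset.mem_filter.mp hv).2.symm
            calc ∑ v ∈ A.filter (fun v => G.Adj v w), m s(v, w)
                = ∑ v ∈ A.filter (fun v => G.Adj v w), m s(w, v) := by
                  refine Finset.sum_congr rfl fun v _ => ?_
                  rw [Sym2.eq_swap]
              _ ≤ ∑ v ∈ G.neighborFinset w, m s(w, v) :=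
                  Finset.sum_le_sum_of_subset_of_nonneg hsub fun v _ _ => hm0 _
    have hCload : ∑ w ∈ C, L w ≤ (C.card : ℝ) := by
      calc ∑ w ∈ C, L w ≤ ∑ _w ∈ C, (1 : ℝ) := Finset.sum_le_sum fun w _ => hload w
        _ = C.card := by rw [Finset.sum_const]; simp
    -- contradiction
    have : (A.card : ℝ) ≤ (n : ℝ) - ((A.card : ℝ) + (B.card : ℝ)) := by
      calc (A.card : ℝ) ≤ ∑ v ∈ A, L v := hAload
        _ ≤ ∑ w ∈ C, L w := hswap
        _ ≤ (C.card : ℝ) := hCload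
        _ = (n : ℝ) - ((A.card : ℝ) + (B.card : ℝ)) := by rw [hCcard]
    rw [hBcard] at this
    linarith
  · intro hno
    obtain ⟨f, hfinj, hf⟩ :=
      (Finset.all_card_le_biUnion_card_iff_exists_injective (fun v => G.neighborFinset v)).mp
        (hall_of_no_peninsula G n hcard hno)
    have hfadj : ∀ v, G.Adj v (f v) := fun v => (SimpleGraph.mem_neighborFinset _ _ _).mp (hf v)
    have hfbij : Function.Bijective f := Finite.injective_iff_bijective.mp hfinj
    refine ⟨fun e => ((Finset.univ.filter (fun v => s(v, f v) = e)).card : ℝ) / 2, ?_, ?_, ?_⟩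
    · intro e
      constructor
      · positivity
      · induction e with
        | _ a b =>
          have hsub : Finset.univ.filter (fun v => s(v, f v) = s(a, b)) ⊆ {a, b} := by
            intro u hu
            rw [Finset.mem_filter] at hu
            rcases Sym2.eq_iff.mp hu.2 with ⟨h1, _⟩ | ⟨h1, _⟩
            · simp [h1]
            · simp [h1]
          have h2 : (Finset.univ.filter (fun v => s(v, f v) = s(a, b))).card ≤ 2 := by
            calc _ ≤ ({a, b} : Finset V).card := Finset.card_le_card hsub
              _ ≤ 2 := Finset.card_insert_le a {b} |>.trans (by simp)
          have : ((Finset.univ.filter (fun v => s(v, f v) = s(a, b))).card : ℝ) ≤ 2 := by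
            exact_mod_cast h2
          linarith
    · intro v
      have hkey : ∀ w ∈ G.neighborFinset v,
          ((Finset.univ.filter (fun u => s(u, f u) = s(v, w))).card : ℝ) / 2
            = (if f v = w then (1:ℝ) else 0) / 2 + (if f w = v then (1:ℝ) else 0) / 2 := by
        intro w hw
        have hvw : v ≠ w := G.ne_of_adj ((SimpleGraph.mem_neighborFinset _ _ _).mp hw)
        have mem_iff : ∀ u : V, (s(u, f u) = s(v, w)) ↔
            ((u = v ∧ f v = w) ∨ (u = w ∧ f w = v)) := by
          intro u
          rw [Sym2.eq_iff]
          constructor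
          · rintro (⟨rfl, h⟩ | ⟨rfl, h⟩)
            · exact Or.inl ⟨rfl, h⟩
            · exact Or.inr ⟨rfl, h⟩
          · rintro (⟨rfl, h⟩ | ⟨rfl, h⟩)
            · exact Or.inl ⟨rfl, h⟩
            · exact Or.inr ⟨rfl, h⟩
        by_cases h1 : f v = w
        · by_cases h2 : f w = v
          · have hfe : Finset.univ.filter (fun u => s(u, f u) = s(v, w)) = {v, w} := by
              ext u
              simp only [Finset.mem_filter, Finset.mem_univ, true_and, mem_iff u, h1, h2,
                and_true, Finset.mem_insert, Finset.mem_singleton]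
            rw [hfe, Finset.card_insert_of_notMem (by simp [hvw]), Finset.card_singleton,
              if_pos h1, if_pos h2]
            norm_num
          · have hfe : Finset.univ.filter (fun u => s(u, f u) = s(v, w)) = {v} := by
              ext u
              simp only [Finset.mem_filter, Finset.mem_univ, true_and, mem_iff u, h1, h2,
                and_true, and_false, or_false, Finset.mem_singleton]
            rw [hfe, Finset.card_singleton, if_pos h1, if_neg h2]
            norm_num
        · by_cases h2 : f w = v
          · have hfe : Finset.univ.filter (fun u => s(u, f u) = s(v, w)) = {w} := by
              ext u
              simp only [Finset.mem_filter, Finset.mem_univ, true_and, mem_iff u, h1, h2,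
                and_true, and_false, false_or, Finset.mem_singleton]
            rw [hfe, Finset.card_singleton, if_neg h1, if_pos h2]
            norm_num
          · have hfe : Finset.univ.filter (fun u => s(u, f u) = s(v, w)) = ∅ := by
              ext u
              simp only [Finset.mem_filter, Finset.mem_univ, true_and, mem_iff u, h1, h2,
                and_false, or_false, Finset.notMem_empty, iff_false, not_false_iff]
            rw [hfe, Finset.card_empty, if_neg h1, if_neg h2]
            norm_num
      rw [Finset.sum_congr rfl hkey, Finset.sum_add_distrib]
      have hs1 : ∑ w ∈ G.neighborFinset v, (if f v = w then (1:ℝ) else 0) / 2 = 1 / 2 := by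
        rw [← Finset.sum_div, Finset.sum_ite_eq, if_pos (hf v)]
      have hs2 : ∑ w ∈ G.neighborFinset v, (if f w = v then (1:ℝ) else 0) / 2 = 1 / 2 := by
        obtain ⟨u, hu⟩ := hfbij.2 v
        have huN : u ∈ G.neighborFinset v := by
          rw [SimpleGraph.mem_neighborFinset]
          have := hfadj u
          rw [hu] at this
          exact this.symm
        have : ∀ w ∈ G.neighborFinset v, (if f w = v then (1:ℝ) else 0) / 2
            = (if w = u then (1:ℝ) else 0) / 2 := by
          intro w _
          congr 1
          refine if_congr ?_ rfl rfl
          constructor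
          · intro h; exact hfinj (h.trans hu.symm)
          · rintro rfl; exact hu
        rw [Finset.sum_congr rfl this, ← Finset.sum_div, Finset.sum_ite_eq', if_pos huN]
      rw [hs1, hs2]
      norm_num
    · have hmaps : ∀ v ∈ (Finset.univ : Finset V), s(v, f v) ∈ G.edgeFinset := by
        intro v _
        rw [SimpleGraph.mem_edgeFinset, SimpleGraph.mem_edgeSet]
        exact hfadj v
      have hcount : (Finset.univ : Finset V).card
          = ∑ e ∈ G.edgeFinset, (Finset.univ.filter (fun v => s(v, f v) = e)).card :=
        Finset.card_eq_sum_card_fiberwise hmaps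
      have hR : ∑ e ∈ G.edgeFinset,
          ((Finset.univ.filter (fun v => s(v, f v) = e)).card : ℝ) = (n : ℝ) := by
        have hc := congrArg (Nat.cast : ℕ → ℝ) hcount
        push_cast at hc
        rw [← hc, Finset.card_univ, hcard]
      rw [← Finset.sum_div, hR]

end Stmt
end

section
/- For every d ∈ (0,1] there exists ε₀ > 0 such that for every ε ∈ (0, ε₀] there exists r₀ ∈ ℕ such that for every r ≥ r₀ there exists ζ₀ > 0 such that for every ζ ∈ (0, ζ₀] there exists n₀ such that for every n ≥ n₀ the following holds. Let G be an n-vertex simple graph with an ε-regular partition V(G) = V_1 ⊔ … ⊔ V_r and let R be the (ε,d)-reduced graph of G with respect to this partition. If R is connected and non-bipartite, then there is an odd integer L ≤ 2r such that for every pair i, j ∈ V(R) (not necessarily distinct) and every two sets X ⊆ V_i with |X| ≥ d|V_i| and Y ⊆ V_j with |Y| ≥ d|V_j|, there are at least ζ n^{L+1} paths in G of length L with one endvertex in X and the other endvertex in Y. -/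
open scoped Classical

namespace Stmt

/-- The number of edges of `G` between `A` and `B` (ordered pairs). -/
noncomputable def interCount {V : Type} [Fintype V] (G : SimpleGraph V)
    (A B : Finset V) : ℕ :=
  ((A ×ˢ B).filter fun p => G.Adj p.1 p.2).card

/-- The edge density between `A` and `B` in `G`. -/
noncomputable def density {V : Type} [Fintype V] (G : SimpleGraph V)
    (A B : Finset V) : ℝ :=
  (interCount G A B : ℝ) / ((A.card : ℝ) * (B.card : ℝ))

/-- The pair `(A, B)` is `ε`-regular in `G`. -/
def EpsRegular {V : Type} [Fintype V] (G : SimpleGraph V) (ε : ℝ)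
    (A B : Finset V) : Prop :=
  ∀ A' ⊆ A, ∀ B' ⊆ B, ε * (A.card : ℝ) ≤ (A'.card : ℝ) →
    ε * (B.card : ℝ) ≤ (B'.card : ℝ) →
    |density G A' B' - density G A B| ≤ ε

/-- `P` is an `ε`-regular partition of `G` into `r` parts: the parts are pairwise disjoint,
cover the vertex set, have sizes differing by at most 1, and all but at most `εr²` pairs of
indices give `ε`-regular pairs. -/
def IsRegularPartition {V : Type} [Fintype V] (G : SimpleGraph V) (ε : ℝ) {r : ℕ}
    (P : Fin r → Finset V) : Prop :=
  (∀ i j, i ≠ j → Disjoint (P i) (P j)) ∧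
  (∀ v : V, ∃ i, v ∈ P i) ∧
  (∀ i j, (P i).card ≤ (P j).card + 1) ∧
  (((Finset.univ.filter fun q : Fin r × Fin r =>
      ¬ EpsRegular G ε (P q.1) (P q.2)).card : ℝ) ≤ ε * (r : ℝ) ^ 2)

/-- The `(ε, d)`-reduced graph of `G` with respect to the partition `P`: vertices are the
indices and `i ∼ j` iff `(P i, P j)` is an `ε`-regular pair of density at least `d`. -/
def reducedGraph {V : Type} [Fintype V] (G : SimpleGraph V) (ε d : ℝ) {r : ℕ}
    (P : Fin r → Finset V) : SimpleGraph (Fin r) :=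
  SimpleGraph.fromRel fun i j => EpsRegular G ε (P i) (P j) ∧ d ≤ density G (P i) (P j)

/-- A graph is bipartite if its vertex set can be partitioned into two independent sets. -/
def IsBipartite {V : Type} (H : SimpleGraph V) : Prop :=
  ∃ S : Set V, ∀ ⦃u v : V⦄, H.Adj u v → (u ∈ S ↔ v ∉ S)

/-- The set of paths of length `L` in `G` starting in `X` and ending in `Y`. -/
def pathsBetween {V : Type} (G : SimpleGraph V) (L : ℕ) (X Y : Set V) :
    Set (Σ u : V, Σ v : V, G.Walk u v) :=
  {q | q.2.2.IsPath ∧ q.2.2.length = L ∧ q.1 ∈ X ∧ q.2.1 ∈ Y}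

/-!
A connected non-bipartite reduced graph has an odd walk between any two clusters; shortcutting a
repeated (vertex, parity) pair shows that one of length less than `2r` exists, and backtracking
along an edge pads it to length exactly `L = 2r - 1`, the same for every pair. Along such a walk
`i = c₀, …, c_L = j` put `T₀ = X` and let `T_{k+1}` be the set of vertices of `V_{c_{k+1}}` (of `Y`
when `k + 1 = L`) with at least `(d/2)|T_k|` neighbours in `T_k`. By `ε`-regularity of
`(V_{c_k}, V_{c_{k+1}})` at most `ε|V_{c_{k+1}}|` vertices fail this, so every `T_k` keeps a
`d/2`-fraction of its cluster, which has at least `n/(2r)` vertices. Building a path backwards from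
`T_L ⊆ Y`, there are at least `(d/2)|T_k| - L` fresh choices at each step, hence at least
`(d²n/(16r))^(L+1)` paths once `n` is large.
-/

section OddWalks

variable {W : Type} {R : SimpleGraph W}

lemma isBipartite_of_colorable_two (h : R.Colorable 2) : IsBipartite R := by
  obtain ⟨c⟩ := h
  refine ⟨{v | c v = 0}, fun u v huv => ?_⟩
  have := c.valid huv
  show c u = 0 ↔ c v ≠ 0
  omega

lemma exists_odd_walk_of_connected_of_not_isBipartite (hconn : R.Connected)
    (hR : ¬ IsBipartite R) (i j : W) : ∃ w : R.Walk i j, Odd w.length := by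
  obtain ⟨u, c, hc⟩ : ∃ u, ∃ c : R.Walk u u, Odd c.length := by
    by_contra! h
    exact hR (isBipartite_of_colorable_two (SimpleGraph.two_colorable_iff_forall_loop_even.2
      fun u c => Nat.not_odd_iff_even.1 (h u c)))
  obtain ⟨p⟩ := hconn.preconnected i u
  obtain ⟨q⟩ := hconn.preconnected u j
  rcases Nat.even_or_odd (p.append q).length with he | ho
  · refine ⟨(p.append c).append q, ?_⟩
    simp only [SimpleGraph.Walk.length_append] at he ⊢
    rw [Nat.even_iff] at he
    rw [Nat.odd_iff] at hc ⊢
    omega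
  · exact ⟨_, ho⟩

lemma _root_.SimpleGraph.Walk.exists_length_eq_sub_of_getVert_eq {u v : W} (p : R.Walk u v)
    {s t : ℕ} (hst : s ≤ t) (ht : t ≤ p.length) (h : p.getVert s = p.getVert t) :
    ∃ q : R.Walk u v, q.length = p.length - (t - s) :=
  ⟨(p.take s).append ((p.drop t).copy h.symm rfl), by
    simp only [SimpleGraph.Walk.length_append, SimpleGraph.Walk.take_length,
      SimpleGraph.Walk.length_copy, SimpleGraph.Walk.drop_length]
    omega⟩

lemma exists_odd_walk_length_lt [Fintype W] {i j : W} (w : R.Walk i j) (hw : Odd w.length) :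
    ∃ w' : R.Walk i j, Odd w'.length ∧ w'.length < 2 * Fintype.card W := by
  induction h : w.length using Nat.strong_induction_on generalizing w with
  | _ len ih =>
  by_cases hlen : len < 2 * Fintype.card W
  · exact ⟨w, h ▸ hw, h ▸ hlen⟩
  obtain ⟨s, t, hne, hst⟩ := Fintype.exists_ne_map_eq_of_card_lt
    (fun k : Fin (2 * Fintype.card W + 1) => (w.getVert k, decide (Even (k : ℕ))))
    (by simp [mul_comm])
  wlog hlt : s < t generalizing s t
  · exact this t s hne.symm hst.symm (lt_of_le_of_ne (not_lt.1 hlt) hne.symm)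
  simp only [Prod.mk.injEq, decide_eq_decide, Nat.even_iff] at hst
  obtain ⟨q, hq⟩ := w.exists_length_eq_sub_of_getVert_eq hlt.le (by omega) hst.1
  refine ih _ (by omega) q ?_ hq
  rw [hq, Nat.odd_iff]
  rw [Nat.odd_iff] at hw
  omega

lemma _root_.SimpleGraph.Walk.exists_length_eq_add_two_mul {u v : W} (p : R.Walk u v)
    (hp : 0 < p.length) (m : ℕ) : ∃ q : R.Walk u v, q.length = p.length + 2 * m := by
  induction m with
  | zero => exact ⟨p, rfl⟩
  | succ m ih =>
    obtain ⟨q, hq⟩ := ih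
    cases q with
    | nil => simp only [SimpleGraph.Walk.length_nil] at hq; omega
    | cons h q =>
      refine ⟨.cons h (.cons h.symm (.cons h q)), ?_⟩
      simp only [SimpleGraph.Walk.length_cons] at hq ⊢
      omega

lemma exists_walk_length_eq_two_mul_card_sub_one [Fintype W] (hconn : R.Connected)
    (hR : ¬ IsBipartite R) (i j : W) :
    ∃ w : R.Walk i j, w.length = 2 * Fintype.card W - 1 := by
  obtain ⟨w₀, hw₀⟩ := exists_odd_walk_of_connected_of_not_isBipartite hconn hR i j
  obtain ⟨w, ⟨k, hk⟩, hlt⟩ := exists_odd_walk_length_lt w₀ hw₀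
  obtain ⟨q, hq⟩ :=
    w.exists_length_eq_add_two_mul (by omega) ((2 * Fintype.card W - 1 - w.length) / 2)
  exact ⟨q, by omega⟩

end OddWalks

open Finset

section Regularity

variable {V : Type} [Fintype V] {G : SimpleGraph V}

lemma interCount_comm (G : SimpleGraph V) (A B : Finset V) :
    interCount G A B = interCount G B A :=
  @Rel.card_interedges_comm _ G.Adj _ G.symm A B

lemma density_comm (G : SimpleGraph V) (A B : Finset V) : density G A B = density G B A := by
  rw [density, density, interCount_comm, mul_comm]

lemma EpsRegular.symm {ε : ℝ} {A B : Finset V} (h : EpsRegular G ε A B) :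
    EpsRegular G ε B A := fun B' hB' A' hA' hB'c hA'c => by
  simpa only [density_comm G A', density_comm G A] using h A' hA' B' hB' hA'c hB'c

lemma interCount_eq_sum_card_filter_adj (G : SimpleGraph V) (A B : Finset V) :
    interCount G A B = ∑ b ∈ B, #(A.filter (G.Adj b)) := by
  rw [interCount, card_filter, sum_product_right]
  simp_rw [card_filter, G.adj_comm]

lemma EpsRegular.card_filter_card_filter_adj_lt_le {ε : ℝ} {A B X : Finset V}
    (h : EpsRegular G ε A B) (hε : 0 ≤ ε) (hXA : X ⊆ A) (hX : ε * #A ≤ #X) :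
    (#(B.filter fun b => (#(X.filter (G.Adj b)) : ℝ) < (density G A B - ε) * #X) : ℝ)
      ≤ ε * #B := by
  set bad := B.filter fun b => (#(X.filter (G.Adj b)) : ℝ) < (density G A B - ε) * #X
  by_contra! hbad
  obtain ⟨b, hb⟩ : bad.Nonempty :=
    card_pos.1 (by exact_mod_cast (by positivity : 0 ≤ ε * #B).trans_lt hbad)
  have hprod := (Nat.cast_nonneg _).trans_lt (mem_filter.1 hb).2
  have hXpos : (0 : ℝ) < #X :=
    pos_of_mul_pos_right hprod (pos_of_mul_pos_left hprod (Nat.cast_nonneg _)).le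
  have hbadpos : (0 : ℝ) < #bad := by exact_mod_cast card_pos.2 ⟨b, hb⟩
  have hlt : (interCount G X bad : ℝ) < (density G A B - ε) * (#X * #bad) := by
    rw [interCount_eq_sum_card_filter_adj]
    push_cast
    calc ∑ b ∈ bad, (#(X.filter (G.Adj b)) : ℝ) < ∑ _b ∈ bad, (density G A B - ε) * #X :=
          sum_lt_sum_of_nonempty ⟨b, hb⟩ fun b hb => (mem_filter.1 hb).2
      _ = (density G A B - ε) * (#X * #bad) := by rw [sum_const, nsmul_eq_mul]; ring
  have hge : density G A B - ε ≤ density G X bad := by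
    linarith [(abs_le.1 (h X hXA bad (filter_subset _ _) hX hbad.le)).1]
  linarith [(le_div_iff₀ (by positivity)).1 hge]

lemma EpsRegular.card_sub_le_card_filter {ε β : ℝ} {A B X S : Finset V}
    (h : EpsRegular G ε A B) (hε : 0 ≤ ε) (hβ : β ≤ density G A B - ε) (hXA : X ⊆ A)
    (hX : ε * #A ≤ #X) (hSB : S ⊆ B) :
    (#S : ℝ) - ε * #B ≤ #(S.filter fun v => β * #X ≤ #(X.filter (G.Adj v))) := by
  have hcover : S ⊆ (S.filter fun v => β * #X ≤ #(X.filter (G.Adj v))) ∪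
      B.filter fun b => (#(X.filter (G.Adj b)) : ℝ) < (density G A B - ε) * #X := by
    intro v hv
    by_cases hrich : β * #X ≤ #(X.filter (G.Adj v))
    · exact mem_union_left _ (mem_filter.2 ⟨hv, hrich⟩)
    · refine mem_union_right _ (mem_filter.2 ⟨hSB hv, ?_⟩)
      exact (not_le.1 hrich).trans_le (mul_le_mul_of_nonneg_right hβ (Nat.cast_nonneg _))
  have hS := (Nat.cast_le (α := ℝ)).2 ((card_le_card hcover).trans (card_union_le _ _))
  push_cast at hS
  linarith [h.card_filter_card_filter_adj_lt_le hε hXA hX]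

end Regularity

section Chains

variable {V : Type} {G : SimpleGraph V}

noncomputable def richChain (G : SimpleGraph V) (β : ℝ) (B : ℕ → Finset V) : ℕ → Finset V
  | 0 => B 0
  | k + 1 => (B (k + 1)).filter fun v =>
      β * #(richChain G β B k) ≤ #((richChain G β B k).filter (G.Adj v))

lemma richChain_subset (β : ℝ) (B : ℕ → Finset V) (k : ℕ) : richChain G β B k ⊆ B k := by
  cases k
  exacts [subset_rfl, filter_subset _ _]

lemma card_richChain_ge [Fintype V] {ε d : ℝ} {L : ℕ} {A B : ℕ → Finset V} (hε : 0 ≤ ε)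
    (hεd : ε ≤ d / 2)
    (hA : ∀ k < L, EpsRegular G ε (A k) (A (k + 1)) ∧ d ≤ density G (A k) (A (k + 1)))
    (hB : ∀ k ≤ L, B k ⊆ A k ∧ d * #(A k) ≤ #(B k)) :
    ∀ k ≤ L, d / 2 * #(A k) ≤ #(richChain G (d / 2) B k) := by
  intro k
  induction k with
  | zero =>
    intro _
    change _ ≤ (#(B 0) : ℝ)
    nlinarith [(hB 0 (Nat.zero_le _)).2, (#(A 0)).cast_nonneg (α := ℝ)]
  | succ k ih =>
    intro hk
    obtain ⟨hreg, hdens⟩ := hA k hk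
    obtain ⟨hsub, hcard⟩ := hB (k + 1) hk
    have hT := ih (by omega)
    have hrich := hreg.card_sub_le_card_filter hε (β := d / 2) (by linarith)
      ((richChain_subset _ B k).trans (hB k (by omega)).1)
      (by nlinarith [(#(A k)).cast_nonneg (α := ℝ)]) hsub
    change d / 2 * #(A (k + 1)) ≤ #((B (k + 1)).filter _)
    nlinarith [(#(A (k + 1))).cast_nonneg (α := ℝ)]

noncomputable def pathTuples [Fintype V] (G : SimpleGraph V) (L : ℕ) (S : ℕ → Finset V) :
    Finset (Fin (L + 1) → V) :=
  univ.filter fun f => Function.Injective f ∧ (∀ k : Fin (L + 1), f k ∈ S k) ∧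
    ∀ k : Fin L, G.Adj (f k.castSucc) (f k.succ)

lemma cons_mem_pathTuples [Fintype V] {L : ℕ} {S : ℕ → Finset V} {g : Fin (L + 1) → V}
    (hg : g ∈ pathTuples G L fun k => S (k + 1)) {v : V} (hv : v ∈ S 0) (hadj : G.Adj v (g 0))
    (hvg : v ∉ Set.range g) : Fin.cons v g ∈ pathTuples G (L + 1) S := by
  simp only [pathTuples, mem_filter, mem_univ, true_and] at hg ⊢
  obtain ⟨hinj, hmem, hgadj⟩ := hg
  refine ⟨Fin.cons_injective_iff.2 ⟨hvg, hinj⟩, Fin.cases hv fun k => hmem k,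
    Fin.cases hadj fun k => ?_⟩
  simpa [← Fin.succ_castSucc] using hgadj k

lemma card_pathTuples_zero [Fintype V] (S : ℕ → Finset V) : #(S 0) ≤ #(pathTuples G 0 S) :=
  card_le_card_of_injOn (fun v _ => v)
    (fun v hv => by simpa [pathTuples, Function.injective_of_subsingleton] using hv)
    (fun v _ w _ h => congrFun h 0)

lemma card_filter_adj_sub_le_card_filter_notMem_range [Fintype V] {L : ℕ} (S : Finset V)
    (g : Fin (L + 1) → V) (u : V) :
    (#(S.filter (G.Adj u)) : ℝ) - (L + 1) ≤
      #(S.filter fun v => G.Adj v u ∧ v ∉ Set.range g) := by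
  have hsub : S.filter (G.Adj u) ⊆
      (S.filter fun v => G.Adj v u ∧ v ∉ Set.range g) ∪ univ.image g := by
    intro v hv
    rw [mem_filter] at hv
    by_cases hvg : v ∈ Set.range g
    · obtain ⟨k, rfl⟩ := hvg
      exact mem_union_right _ (mem_image_of_mem g (mem_univ k))
    · exact mem_union_left _ (mem_filter.2 ⟨hv.1, hv.2.symm, hvg⟩)
  have hcard := (card_le_card hsub).trans (card_union_le _ _)
  have himage : #(univ.image g) ≤ L + 1 := card_image_le.trans (by simp)
  have hcast := (Nat.cast_le (α := ℝ)).2 (hcard.trans (Nat.add_le_add_left himage _))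
  push_cast at hcast
  linarith

lemma card_pathTuples_ge [Fintype V] {β m : ℝ} (hβ₀ : 0 ≤ β) (hβ₁ : β ≤ 1) (hm : 0 ≤ m) :
    ∀ (L : ℕ) (S : ℕ → Finset V), (L : ℝ) ≤ β * m → (∀ k ≤ L, m ≤ #(S k)) →
      (∀ k < L, ∀ v ∈ S (k + 1), β * #(S k) ≤ #((S k).filter (G.Adj v))) →
      (β * m - L) ^ (L + 1) ≤ #(pathTuples G L S) := by
  intro L
  induction L with
  | zero =>
    intro S _ hS _
    have : (#(S 0) : ℝ) ≤ #(pathTuples G 0 S) := by exact_mod_cast card_pathTuples_zero S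
    rw [Nat.cast_zero, sub_zero, pow_one]
    linarith [hS 0 le_rfl, mul_le_of_le_one_left hm hβ₁]
  | succ L ih =>
    intro S hL hS hadj
    push_cast at hL ⊢
    set tails := pathTuples G L fun k => S (k + 1)
    set heads : (Fin (L + 1) → V) → Finset V :=
      fun g => (S 0).filter fun v => G.Adj v (g 0) ∧ v ∉ Set.range g
    have hheads : ∀ g ∈ tails, β * m - (L + 1) ≤ #(heads g) := by
      intro g hg
      have hg0 : g 0 ∈ S 1 := by
        simp only [tails, pathTuples, mem_filter] at hg
        exact hg.2.2.1 0
      have := card_filter_adj_sub_le_card_filter_notMem_range (G := G) (S 0) g (g 0)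
      nlinarith [hadj 0 (by omega) (g 0) hg0, hS 0 (by omega)]
    have htails := ih (fun k => S (k + 1)) (by linarith) (fun k hk => hS (k + 1) (by omega))
      (fun k hk => hadj (k + 1) (by omega))
    have hbase : 0 ≤ β * m - (L + 1) := by linarith
    have hmono : (β * m - (L + 1)) ^ (L + 1) ≤ (β * m - L) ^ (L + 1) :=
      pow_le_pow_left₀ hbase (by linarith) _
    calc (β * m - (L + 1)) ^ (L + 1 + 1)
        = (β * m - (L + 1)) ^ (L + 1) * (β * m - (L + 1)) := pow_succ _ _
      _ ≤ #tails * (β * m - (L + 1)) := by gcongr; linarith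
      _ ≤ ∑ g ∈ tails, (#(heads g) : ℝ) := by
          rw [← nsmul_eq_mul, ← sum_const]
          exact sum_le_sum hheads
      _ = #(tails.sigma heads) := by rw [card_sigma]; push_cast; rfl
      _ ≤ #(pathTuples G (L + 1) S) := by
          refine Nat.cast_le.2 (card_le_card_of_injOn (fun x => Fin.cons x.2 x.1) ?_ ?_)
          · rintro ⟨g, v⟩ hgv
            simp only [coe_sigma, Set.mem_sigma_iff, mem_coe, heads, mem_filter] at hgv
            exact cons_mem_pathTuples hgv.1 hgv.2.1 hgv.2.2.1 hgv.2.2.2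
          · rintro ⟨g, v⟩ _ ⟨g', v'⟩ _ h
            obtain ⟨rfl, rfl⟩ := Fin.cons_inj.1 h
            rfl

end Chains

section Paths

variable {V : Type} {G : SimpleGraph V}

lemma exists_walk_support_eq_ofFn {L : ℕ} (f : Fin (L + 1) → V)
    (hf : ∀ k : Fin L, G.Adj (f k.castSucc) (f k.succ)) :
    ∃ p : G.Walk (f 0) (f (Fin.last L)), p.support = List.ofFn f := by
  have hchain : (List.ofFn f).IsChain G.Adj :=
    List.isChain_ofFn.2 fun k hk => hf ⟨k, by omega⟩
  refine ⟨(SimpleGraph.Walk.ofSupport _ (by simp) hchain).copy (by simp)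
    (List.getLast_ofFn_succ f), ?_⟩
  simp

lemma sigma_walk_support_injective :
    Function.Injective fun q : Σ u v : V, G.Walk u v => q.2.2.support := by
  rintro ⟨u, v, p⟩ ⟨u', v', p'⟩ h
  simp only at h
  obtain rfl : u = u' := by
    rw [← p.head_support, ← p'.head_support]
    simp only [h]
  obtain rfl : v = v' := by
    rw [← p.getLast_support, ← p'.getLast_support]
    simp only [h]
  rw [SimpleGraph.Walk.ext_support h]

lemma finite_pathsBetween [Finite V] (L : ℕ) (X Y : Set V) : (pathsBetween G L X Y).Finite :=
  ((List.finite_length_eq V (L + 1)).preimage sigma_walk_support_injective.injOn).subset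
    fun q hq => by simp [hq.2.1]

lemma card_pathTuples_le_ncard_pathsBetween [Fintype V] {L : ℕ} {S : ℕ → Finset V}
    {X Y : Set V} (hX : ↑(S 0) ⊆ X) (hY : ↑(S L) ⊆ Y) :
    #(pathTuples G L S) ≤ (pathsBetween G L X Y).ncard := by
  have himage : ↑(pathTuples G L S) ⊆
      (fun (q : Σ u v : V, G.Walk u v) (k : Fin (L + 1)) => q.2.2.getVert k) ''
        pathsBetween G L X Y := by
    intro f hf
    simp only [pathTuples, coe_filter, mem_univ, true_and] at hf
    obtain ⟨hinj, hmem, hadj⟩ := hf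
    obtain ⟨p, hp⟩ := exists_walk_support_eq_ofFn f hadj
    have hlen : p.length = L := by
      have := p.length_support
      rw [hp, List.length_ofFn] at this
      omega
    have hlast : f (Fin.last L) ∈ S L := by simpa using hmem (Fin.last L)
    refine ⟨⟨_, _, p⟩, ⟨?_, hlen, hX (hmem 0), hY hlast⟩, ?_⟩
    · rw [SimpleGraph.Walk.isPath_def, hp]
      exact List.nodup_ofFn.2 hinj
    · funext k
      change p.getVert k = f k
      rw [p.getVert_eq_support_getElem (by omega)]
      simp only [hp, List.getElem_ofFn]
  rw [← Set.ncard_coe_finset]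
  exact (Set.ncard_le_ncard himage ((finite_pathsBetween L X Y).image _)).trans
    (Set.ncard_image_le (finite_pathsBetween L X Y))

end Paths

section ReducedGraph

variable {V : Type} [Fintype V] {G : SimpleGraph V} {ε d : ℝ} {r : ℕ} {P : Fin r → Finset V}

lemma epsRegular_and_le_density_of_reducedGraph_adj {a b : Fin r}
    (h : (reducedGraph G ε d P).Adj a b) :
    EpsRegular G ε (P a) (P b) ∧ d ≤ density G (P a) (P b) := by
  rw [reducedGraph, SimpleGraph.fromRel_adj] at h
  rcases h.2 with h | ⟨hreg, hd⟩
  · exact h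
  · exact ⟨hreg.symm, density_comm G (P b) (P a) ▸ hd⟩

lemma IsRegularPartition.div_le_card (hP : IsRegularPartition G ε P)
    (hr : 2 * r ≤ Fintype.card V) (k : Fin r) :
    (Fintype.card V : ℝ) / (2 * r) ≤ #(P k) := by
  obtain ⟨-, hcover, hbal, -⟩ := hP
  have hV : Fintype.card V ≤ r * #(P k) + r :=
    calc Fintype.card V = #(univ : Finset V) := card_univ.symm
      _ ≤ #(univ.biUnion P) := card_le_card fun v _ => by
          obtain ⟨t, ht⟩ := hcover v
          exact mem_biUnion.2 ⟨t, mem_univ t, ht⟩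
      _ ≤ ∑ t, #(P t) := card_biUnion_le
      _ ≤ ∑ _t : Fin r, (#(P k) + 1) := sum_le_sum fun t _ => hbal t k
      _ = r * #(P k) + r := by simp [mul_add]
  have hr0 : 0 < r := k.pos
  have hcomm : #(P k) * (2 * r) = 2 * (r * #(P k)) := by ring
  rw [div_le_iff₀ (by positivity)]
  exact_mod_cast (by omega : Fintype.card V ≤ #(P k) * (2 * r))

end ReducedGraph

lemma le_ncard_pathsBetween_of_walk {V : Type} [Fintype V] {G : SimpleGraph V} {ε d m : ℝ}
    {r : ℕ} {P : Fin r → Finset V} (hε : 0 ≤ ε) (hεd : ε ≤ d / 2) (hd : d ≤ 1) (hm : 0 ≤ m)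
    (hP : ∀ k, m ≤ #(P k)) {i j : Fin r} (w : (reducedGraph G ε d P).Walk i j)
    (hw : 0 < w.length) (hL : (w.length : ℝ) ≤ d / 2 * (d / 2 * m)) {X Y : Finset V}
    (hX : X ⊆ P i) (hY : Y ⊆ P j) (hXc : d * #(P i) ≤ #X) (hYc : d * #(P j) ≤ #Y) :
    (d / 2 * (d / 2 * m) - w.length) ^ (w.length + 1) ≤
      (pathsBetween G w.length (↑X : Set V) (↑Y : Set V)).ncard := by
  set L := w.length
  set A : ℕ → Finset V := fun k => P (w.getVert k)
  set B : ℕ → Finset V := fun k => if k = 0 then X else if k = L then Y else A k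
  have hA : ∀ k < L, EpsRegular G ε (A k) (A (k + 1)) ∧ d ≤ density G (A k) (A (k + 1)) :=
    fun k hk => epsRegular_and_le_density_of_reducedGraph_adj (w.adj_getVert_succ hk)
  have hB : ∀ k ≤ L, B k ⊆ A k ∧ d * #(A k) ≤ #(B k) := by
    intro k hk
    simp only [B, A]
    split_ifs with h0 hkL
    · simpa [h0] using ⟨hX, hXc⟩
    · simpa [hkL, L] using ⟨hY, hYc⟩
    · exact ⟨subset_rfl, mul_le_of_le_one_left (Nat.cast_nonneg _) hd⟩
  set T := richChain G (d / 2) B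
  have hT := card_richChain_ge hε hεd hA hB
  have htuples : (d / 2 * (d / 2 * m) - L) ^ (L + 1) ≤ #(pathTuples G L T) :=
    card_pathTuples_ge (by linarith) (by linarith) (by nlinarith) L T hL
      (fun k hk => le_trans (by gcongr; exacts [by linarith, hP _]) (hT k hk))
      (fun k _ v hv => (mem_filter.1 hv).2)
  have hT0 : T 0 ⊆ X := by simp [T, richChain, B]
  have hTL : T L ⊆ Y := (richChain_subset _ B L).trans (by simp [B, hw.ne'])
  exact htuples.trans (Nat.cast_le.2 (card_pathTuples_le_ncard_pathsBetween
    (coe_subset.2 hT0) (coe_subset.2 hTL)))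

/-- If the reduced graph of a regular partition is connected and non-bipartite, then there is
an odd `L ≤ 2r` such that any two large subsets of any two clusters are joined by many paths
of length `L`. -/
theorem many_odd_paths_of_connected_nonbipartite_reduced_graph :
    ∀ d : ℝ, d ∈ Set.Ioc (0:ℝ) 1 → ∃ ε₀ : ℝ, 0 < ε₀ ∧
      ∀ ε ∈ Set.Ioc (0:ℝ) ε₀, ∃ r₀ : ℕ, ∀ r : ℕ, r₀ ≤ r → ∃ ζ₀ : ℝ, 0 < ζ₀ ∧
        ∀ ζ ∈ Set.Ioc (0:ℝ) ζ₀, ∃ n₀ : ℕ, ∀ n : ℕ, n₀ ≤ n →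
          ∀ (V : Type) [Fintype V], Fintype.card V = n →
            ∀ (G : SimpleGraph V) (P : Fin r → Finset V),
              IsRegularPartition G ε P →
              (reducedGraph G ε d P).Connected →
              ¬ IsBipartite (reducedGraph G ε d P) →
              ∃ L : ℕ, Odd L ∧ L ≤ 2 * r ∧
                ∀ i j : Fin r, ∀ X ⊆ P i, ∀ Y ⊆ P j,
                  d * ((P i).card : ℝ) ≤ (X.card : ℝ) →
                  d * ((P j).card : ℝ) ≤ (Y.card : ℝ) →
                  ζ * (n : ℝ) ^ (L + 1) ≤
                    ((pathsBetween G L (↑X : Set V) (↑Y : Set V)).ncard : ℝ) := by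
  rintro d ⟨hd₀, hd₁⟩
  refine ⟨d / 2, by positivity, ?_⟩
  rintro ε ⟨hε₀, hεd⟩
  refine ⟨1, fun r hr => ?_⟩
  set L := 2 * r - 1
  refine ⟨(d ^ 2 / (16 * r)) ^ (L + 1), by positivity, ?_⟩
  rintro ζ ⟨-, hζ⟩
  refine ⟨2 * r + ⌈16 * r * L / d ^ 2⌉₊, fun n hn V _ hV G P hP hconn hR => ?_⟩
  refine ⟨L, ⟨r - 1, by omega⟩, by omega, fun i j X hX Y hY hXc hYc => ?_⟩
  obtain ⟨w, hw⟩ := exists_walk_length_eq_two_mul_card_sub_one hconn hR i j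
  rw [Fintype.card_fin] at hw
  have hr₀ : (0 : ℝ) < r := by exact_mod_cast hr
  have hLn : (L : ℝ) ≤ d ^ 2 * n / (16 * r) := by
    have hn : 16 * r * L / d ^ 2 ≤ (n : ℝ) :=
      (Nat.le_ceil _).trans (by exact_mod_cast (by omega : ⌈16 * r * L / d ^ 2⌉₊ ≤ n))
    rw [div_le_iff₀ (by positivity)] at hn
    rw [le_div_iff₀ (by positivity)]
    linarith
  have hβm : d / 2 * (d / 2 * (n / (2 * r))) = 2 * (d ^ 2 * n / (16 * r)) := by
    field_simp
    ring
  have hpaths := le_ncard_pathsBetween_of_walk hε₀.le hεd hd₁ (by positivity)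
    (hV ▸ hP.div_le_card (by omega)) w (by omega) (by rw [hw]; linarith) hX hY hXc hYc
  rw [hw] at hpaths
  calc ζ * (n : ℝ) ^ (L + 1) ≤ (d ^ 2 / (16 * r)) ^ (L + 1) * n ^ (L + 1) := by gcongr
    _ = (d ^ 2 * n / (16 * r)) ^ (L + 1) := by rw [← mul_pow]; ring
    _ ≤ (d / 2 * (d / 2 * (n / (2 * r))) - L) ^ (L + 1) := by gcongr; linarith
    _ ≤ _ := hpaths

end Stmt
end

section
/- Let n, L ∈ ℕ, ζ > 0, let G be a simple graph on n vertices, let u ≠ v be vertices of G, and let U ⊆ V(G) ∖ {u, v}. Suppose that there are at least ζ n^{L+1} paths in G from u to v of length L + 2 all of whose internal vertices lie in U. Then there exists a family of at least ζn/(2(L+3)²) pairwise internally disjoint paths in G from u to v of length L + 2 all of whose internal vertices lie in U. -/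
namespace Stmt

open SimpleGraph

variable {V : Type} {G : SimpleGraph V}

private lemma walk_support_inj : ∀ {u v : V} (p q : G.Walk u v), p.support = q.support → p = q := by
  intro u v p
  induction p with
  | nil =>
    intro q h
    cases q with
    | nil => rfl
    | cons h' q' =>
      exfalso
      simp only [Walk.support_nil, Walk.support_cons, List.cons.injEq] at h
      exact Walk.support_ne_nil q' h.2.symm
  | @cons a b c h' p' ih =>
    intro q hq
    cases q with
    | nil =>
      exfalso
      simp only [Walk.support_nil, Walk.support_cons, List.cons.injEq] at hq
      exact Walk.support_ne_nil p' hq.2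
    | @cons _ b' _ h'' q' =>
      simp only [Walk.support_cons, List.cons.injEq] at hq
      have hw : b = b' := by
        have h1 := p'.support_eq_cons
        have h2 := q'.support_eq_cons
        rw [hq.2, h2, List.cons.injEq] at h1
        exact h1.1.symm
      subst hw
      rw [ih q' hq.2]

private lemma support_decomp {u v : V} (p : G.Walk u v) (hl : 1 ≤ p.length) :
    p.support = u :: (p.support.tail.dropLast ++ [v]) := by
  have hne : p.support.tail ≠ [] := by
    have := p.length_support
    intro h
    rw [p.support_eq_cons, h] at this
    simp only [List.length_cons, List.length_nil] at this
    omega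
  have h3 : p.support.tail.getLast hne = v := by
    rw [List.getLast_tail]; exact p.getLast_support
  have h4 := List.dropLast_append_getLast hne
  rw [h3] at h4
  conv_lhs => rw [p.support_eq_cons, ← h4]

private lemma internal_length {u v : V} (p : G.Walk u v) :
    p.support.tail.dropLast.length = p.length - 1 := by
  have h1 := p.length_support
  rw [List.length_dropLast, List.length_tail, h1]
  omega

private lemma internal_inj {u v : V} (p q : G.Walk u v) (hp : 1 ≤ p.length)
    (hq : 1 ≤ q.length) (h : p.support.tail.dropLast = q.support.tail.dropLast) :
    p = q := by
  apply walk_support_inj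
  rw [support_decomp p hp, support_decomp q hq, h]

private lemma ofFn_getD {m : ℕ} (l : List V) (hl : l.length = m) (u : V) :
    List.ofFn (fun i : Fin m => l.getD i u) = l := by
  apply List.ext_getElem
  · simp [hl]
  · intro i h1 h2
    simp only [List.getElem_ofFn]
    rw [List.getD_eq_getElem l u h2]

/-- If there are at least `ζ n^{L+1}` paths of length `L+2` from `u` to `v` with all internal
vertices in `U`, then there is a family of at least `ζn / (2(L+3)²)` pairwise internally
disjoint such paths. -/
theorem internally_disjoint_paths_of_many_paths
    (n L : ℕ) (ζ : ℝ) {V : Type} [Fintype V] (hn : Fintype.card V = n)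
    (G : SimpleGraph V) (u v : V) (huv : u ≠ v)
    (U : Set V) (hU : U ⊆ ({u, v} : Set V)ᶜ)
    (hmany : ζ * (n : ℝ) ^ (L + 1) ≤
      (({p : G.Walk u v | p.IsPath ∧ p.length = L + 2 ∧
        ∀ x ∈ p.support.tail.dropLast, x ∈ U}).ncard : ℝ)) :
    ∃ S : Set (G.Walk u v),
      (∀ p ∈ S, p.IsPath ∧ p.length = L + 2 ∧
        ∀ x ∈ p.support.tail.dropLast, x ∈ U) ∧
      (S.Pairwise fun p q => ∀ x ∈ p.support.tail.dropLast,
        x ∉ q.support.tail.dropLast) ∧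
      ζ * (n : ℝ) / (2 * ((L : ℝ) + 3) ^ 2) ≤ (S.ncard : ℝ) := by
  classical
  have hn1 : 1 ≤ n := by
    rw [← hn]
    exact Fintype.card_pos_iff.mpr ⟨u⟩
  set P : Set (G.Walk u v) := {p : G.Walk u v | p.IsPath ∧ p.length = L + 2 ∧
    ∀ x ∈ p.support.tail.dropLast, x ∈ U} with hPdef
  set D : G.Walk u v → List V := fun p => p.support.tail.dropLast with hDdef
  have hlen : ∀ p ∈ P, (D p).length = L + 1 := by
    intro p hp
    rw [hDdef]
    simp only
    rw [internal_length, hp.2.1]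
    omega

  set F : G.Walk u v → Fin (L + 1) → V := fun p i => (D p).getD i u with hFdef
  have hFD : ∀ p ∈ P, List.ofFn (F p) = D p := fun p hp => ofFn_getD _ (hlen p hp) u
  have hInj : ∀ p ∈ P, ∀ q ∈ P, F p = F q → p = q := by
    intro p hp q hq h
    have hD : D p = D q := by rw [← hFD p hp, ← hFD q hq, h]
    exact internal_inj p q (by rw [hp.2.1]; omega) (by rw [hq.2.1]; omega) hD
  have hmem : ∀ p ∈ P, ∀ x ∈ D p, ∃ i : Fin (L + 1), F p i = x := by
    intro p hp x hx
    obtain ⟨k, hk, hget⟩ := List.getElem_of_mem hx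
    refine ⟨⟨k, by rw [← hlen p hp]; exact hk⟩, ?_⟩
    rw [hFdef]
    simp only
    rw [List.getD_eq_getElem _ u hk]
    exact hget
  -- P is finite
  have hPfin : P.Finite := by
    have himg : (F '' P).Finite := Set.toFinite _
    exact Set.Finite.of_finite_image himg (fun p hp q hq h => hInj p hp q hq h)
  set T : Finset (G.Walk u v) := hPfin.toFinset with hTdef
  have hTP : ∀ p, p ∈ T ↔ p ∈ P := by
    intro p; rw [hTdef, Set.Finite.mem_toFinset]
  -- maximal internally disjoint subfamily
  set Dis : G.Walk u v → G.Walk u v → Prop := fun p q => ∀ x ∈ D p, x ∉ D q with hDisdef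
  set cands : Finset (Finset (G.Walk u v)) :=
    T.powerset.filter (fun s => (↑s : Set (G.Walk u v)).Pairwise Dis) with hcandsdef
  have hcne : cands.Nonempty := by
    refine ⟨∅, ?_⟩
    rw [hcandsdef, Finset.mem_filter]
    exact ⟨Finset.empty_mem_powerset T, by simp⟩
  obtain ⟨s₀, hs₀, hmax⟩ := cands.exists_max_image Finset.card hcne
  rw [hcandsdef, Finset.mem_filter, Finset.mem_powerset] at hs₀
  have hs₀P : ∀ p ∈ s₀, p ∈ P := fun p hp => (hTP p).mp (hs₀.1 hp)
  -- every p in P meets some q in s₀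
  have hit : ∀ p ∈ P, ∃ q, q ∈ s₀ ∧ ∃ x, x ∈ D p ∧ x ∈ D q := by
    intro p hp
    by_cases hps : p ∈ s₀
    · refine ⟨p, hps, ?_⟩
      have hne : D p ≠ [] := by
        intro h
        have := hlen p hp
        rw [h] at this
        simp at this
      obtain ⟨x, hx⟩ := List.exists_mem_of_ne_nil (D p) hne
      exact ⟨x, hx, hx⟩
    · by_contra hcon
      push_neg at hcon
      have hins : insert p s₀ ∈ cands := by
        rw [hcandsdef, Finset.mem_filter, Finset.mem_powerset]
        constructor
        · intro q hq
          rw [Finset.mem_insert] at hq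
          rcases hq with rfl | hq
          · exact (hTP q).mpr hp
          · exact hs₀.1 hq
        · rw [Finset.coe_insert]
          rw [Set.pairwise_insert]
          refine ⟨hs₀.2, ?_⟩
          intro q hq _
          constructor
          · intro x hxp hxq
            exact hcon q hq x hxp hxq
          · intro x hxq hxp
            exact hcon q hq x hxp hxq
      have hcard := hmax _ hins
      rw [Finset.card_insert_of_notMem hps] at hcard
      omega
  -- the injection
  have hit' : ∀ p : {p // p ∈ P}, ∃ qij : {q // q ∈ s₀} × Fin (L + 1) × Fin (L + 1),
      F p.1 qij.2.1 = F qij.1.1 qij.2.2 := by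
    intro ⟨p, hp⟩
    obtain ⟨q, hq, x, hxp, hxq⟩ := hit p hp
    obtain ⟨i, hi⟩ := hmem p hp x hxp
    obtain ⟨j, hj⟩ := hmem q (hs₀P q hq) x hxq
    exact ⟨⟨⟨q, hq⟩, i, j⟩, by rw [hi, hj]⟩
  choose t ht using hit'
  set g : {p // p ∈ P} → ({q // q ∈ s₀} × Fin (L + 1) × Fin (L + 1)) × (Fin L → V) :=
    fun p => (t p, (t p).2.1.removeNth (F p.1)) with hgdef
  have hginj : Function.Injective g := by
    intro p p' h
    rw [hgdef] at h
    simp only [Prod.mk.injEq] at h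
    obtain ⟨h1, h2⟩ := h
    have hi : (t p).2.1 = (t p').2.1 := by rw [h1]
    have hval : F p.1 (t p).2.1 = F p'.1 (t p').2.1 := by
      rw [ht p, ht p', h1]
    have hFeq : F p.1 = F p'.1 := by
      have e1 := Fin.insertNth_self_removeNth (t p).2.1 (F p.1)
      have e2 := Fin.insertNth_self_removeNth (t p').2.1 (F p'.1)
      rw [hi] at h2 hval
      rw [← e1, ← e2, hi, hval, h2]
    exact Subtype.ext (hInj p.1 p.2 p'.1 p'.2 hFeq)
  -- counting
  have hcount : P.ncard ≤ s₀.card * ((L + 1) * ((L + 1) * n ^ L)) := by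
    have h1 : P.ncard = Nat.card {p // p ∈ P} := (Nat.card_coe_set_eq P).symm
    rw [h1]
    have h2 := Nat.card_le_card_of_injective g hginj
    refine h2.trans ?_
    rw [Nat.card_eq_fintype_card]
    simp [Fintype.card_fun, hn, mul_assoc]
  -- conclusion
  refine ⟨(↑s₀ : Set (G.Walk u v)), fun p hp => hs₀P p hp, hs₀.2, ?_⟩
  rw [Set.ncard_coe_finset]
  set A : ℝ := (s₀.card : ℝ) with hAdef
  have hA0 : (0 : ℝ) ≤ A := Nat.cast_nonneg _
  have hkey : ζ * (n : ℝ) ^ (L + 1) ≤ A * (((L : ℝ) + 1) * (((L : ℝ) + 1) * (n : ℝ) ^ L)) := by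
    refine hmany.trans ?_
    have := hcount
    calc (P.ncard : ℝ) ≤ ((s₀.card * ((L + 1) * ((L + 1) * n ^ L)) : ℕ) : ℝ) :=
          Nat.cast_le.mpr hcount
      _ = A * (((L : ℝ) + 1) * (((L : ℝ) + 1) * (n : ℝ) ^ L)) := by push_cast; ring
  have hnL : (0 : ℝ) < (n : ℝ) ^ L := by
    apply pow_pos
    exact_mod_cast hn1
  have e2 : ζ * (n : ℝ) ≤ A * (((L : ℝ) + 1) * ((L : ℝ) + 1)) := by
    have e1 : ζ * (n : ℝ) * (n : ℝ) ^ L ≤ (A * (((L : ℝ) + 1) * ((L : ℝ) + 1))) * (n : ℝ) ^ L := by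
      calc ζ * (n : ℝ) * (n : ℝ) ^ L = ζ * (n : ℝ) ^ (L + 1) := by rw [pow_succ]; ring
        _ ≤ A * (((L : ℝ) + 1) * (((L : ℝ) + 1) * (n : ℝ) ^ L)) := hkey
        _ = (A * (((L : ℝ) + 1) * ((L : ℝ) + 1))) * (n : ℝ) ^ L := by ring
    exact le_of_mul_le_mul_right e1 hnL
  have e3 : A * (((L : ℝ) + 1) * ((L : ℝ) + 1)) ≤ A * (2 * ((L : ℝ) + 3) ^ 2) := by
    apply mul_le_mul_of_nonneg_left _ hA0
    have : (0 : ℝ) ≤ (L : ℝ) := Nat.cast_nonneg _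
    nlinarith
  rw [div_le_iff₀ (by positivity)]
  linarith

end Stmt
end
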